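/- arXiv:2504.17498 — 6 statements merged into one kernel-verified Lean document; each statement's English description precedes it below -/
import Mathlib

section
/- Let λ ∈ (1/2, 1). There exists a constant C ∈ (0,1) such that for any two sequences i, j ∈ {0,1}^ℕ whose longest common prefix has length r, the points π(i), π(j) of the Przytycki–Urbański attractor satisfy d(π(i), π(j)) ≥ C·2^{-r}. -/
open MeasureTheory Filter Set Real

/-- Projection to the x-coordinate: coding map of the IFS {x ↦ λx, x ↦ λx + (1-λ)}. -/
noncomputable def piI (lam : ℝ) (i : ℕ → Fin 2) : ℝ :=
  ∑' n : ℕ, ((i n : ℕ) : ℝ) * (1 - lam) * lam ^ n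

/-- Coding map of the Przytycki–Urbański IFS f₀(x,y)=(λx,y/2), f₁(x,y)=(λx+1-λ, y/2+1/2). -/
noncomputable def piPU (lam : ℝ) (i : ℕ → Fin 2) : ℝ × ℝ :=
  (piI lam i, ∑' n : ℕ, ((i n : ℕ) : ℝ) * (1 / 2 : ℝ) ^ (n + 1))

/-- Euclidean distance on ℝ². -/
noncomputable def dE (p q : ℝ × ℝ) : ℝ := Real.sqrt ((p.1 - q.1) ^ 2 + (p.2 - q.2) ^ 2)

lemma dE_comm (p q : ℝ × ℝ) : dE p q = dE q p := by
  unfold dE; congr 1; ring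

lemma dE_ge_abs_fst (p q : ℝ × ℝ) : |p.1 - q.1| ≤ dE p q := by
  rw [← Real.sqrt_sq_eq_abs]
  exact Real.sqrt_le_sqrt (by nlinarith [sq_nonneg (p.2 - q.2)])

lemma dE_ge_abs_snd (p q : ℝ × ℝ) : |p.2 - q.2| ≤ dE p q := by
  rw [← Real.sqrt_sq_eq_abs]
  exact Real.sqrt_le_sqrt (by nlinarith [sq_nonneg (p.1 - q.1)])

lemma summable_aux (ρ : ℝ) (h0 : 0 ≤ ρ) (h1 : ρ < 1) (s : ℕ → ℝ) (hs : ∀ m, |s m| ≤ 1) :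
    Summable (fun m => s m * ρ ^ m) := by
  apply Summable.of_norm
  apply Summable.of_nonneg_of_le (fun n => norm_nonneg _) (fun n => ?_)
    (summable_geometric_of_lt_one h0 h1)
  rw [Real.norm_eq_abs, abs_mul, abs_pow, abs_of_nonneg h0]
  calc |s n| * ρ ^ n ≤ 1 * ρ ^ n :=
        mul_le_mul_of_nonneg_right (hs n) (pow_nonneg h0 n)
    _ = ρ ^ n := one_mul _

lemma tail_bound (ρ : ℝ) (h0 : 0 ≤ ρ) (h1 : ρ < 1) (s : ℕ → ℝ) (hs : ∀ m, |s m| ≤ 1) (k : ℕ) :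
    |∑' m : ℕ, s (m + k) * ρ ^ (m + k)| ≤ ρ ^ k * (1 - ρ)⁻¹ := by
  have hg : Summable (fun m : ℕ => ρ ^ (m + k)) := by
    have := (summable_geometric_of_lt_one h0 h1).mul_right (ρ ^ k)
    apply this.congr
    intro n
    rw [pow_add]
  have hb : ∀ n : ℕ, |s (n + k) * ρ ^ (n + k)| ≤ ρ ^ (n + k) := by
    intro n
    rw [abs_mul, abs_pow, abs_of_nonneg h0]
    calc |s (n + k)| * ρ ^ (n + k) ≤ 1 * ρ ^ (n + k) :=
          mul_le_mul_of_nonneg_right (hs _) (pow_nonneg h0 _)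
      _ = ρ ^ (n + k) := one_mul _
  have hsum : Summable (fun m : ℕ => |s (m + k) * ρ ^ (m + k)|) :=
    Summable.of_nonneg_of_le (fun n => abs_nonneg _) hb hg
  have hsum' : Summable (fun m : ℕ => ‖s (m + k) * ρ ^ (m + k)‖) :=
    hsum.congr (fun n => (Real.norm_eq_abs _).symm)
  have hnorm := norm_tsum_le_tsum_norm hsum'
  simp only [Real.norm_eq_abs] at hnorm
  calc |∑' m : ℕ, s (m + k) * ρ ^ (m + k)| ≤ ∑' m : ℕ, |s (m + k) * ρ ^ (m + k)| := hnorm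
    _ ≤ ∑' m : ℕ, ρ ^ (m + k) := Summable.tsum_le_tsum hb hsum hg
    _ = ρ ^ k * (1 - ρ)⁻¹ := by
        have : ∀ m : ℕ, ρ ^ (m + k) = ρ ^ m * ρ ^ k := fun m => pow_add ρ m k
        rw [tsum_congr this, tsum_mul_right, tsum_geometric_of_lt_one h0 h1, mul_comm]

lemma run_sum (ρ : ℝ) (s : ℕ → ℝ) (hs0 : s 0 = 1) (k : ℕ)
    (h : ∀ n, 1 ≤ n → n ≤ k → s n = -1) :
    ∑ n ∈ Finset.range (k + 1), s n * ρ ^ n = 2 - ∑ n ∈ Finset.range (k + 1), ρ ^ n := by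
  have h2 : ∑ n ∈ Finset.range (k + 1), (s n + 1) * ρ ^ n = 2 := by
    rw [Finset.sum_eq_single 0 (fun b hb hbne => by
        have hb' : b ≤ k := Nat.lt_succ_iff.mp (Finset.mem_range.mp hb)
        rw [h b (Nat.one_le_iff_ne_zero.mpr hbne) hb']; ring)
      (fun h0 => absurd (Finset.mem_range.mpr (Nat.succ_pos k)) h0)]
    rw [hs0]; norm_num
  calc ∑ n ∈ Finset.range (k + 1), s n * ρ ^ n
      = ∑ n ∈ Finset.range (k + 1), ((s n + 1) * ρ ^ n - ρ ^ n) :=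
        Finset.sum_congr rfl (fun n _ => by ring)
    _ = 2 - ∑ n ∈ Finset.range (k + 1), ρ ^ n := by
        rw [Finset.sum_sub_distrib, h2]

lemma key (lam : ℝ) (hl : (1/2 : ℝ) < lam) (hu : lam < 1) (k : ℕ)
    (hk : lam ^ (k + 1) < (2 * lam - 1) / 4) (s : ℕ → ℝ)
    (hs0 : s 0 = 1) (hsb : ∀ m, |s m| ≤ 1) (hsv : ∀ m, s m = -1 ∨ 0 ≤ s m) :
    (2 * lam - 1) / (2 * (1 - lam)) ≤ |∑' m : ℕ, s m * lam ^ m| ∨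
      (1/2 : ℝ) ^ k ≤ ∑' m : ℕ, s m * (1/2 : ℝ) ^ m := by
  have hl0 : (0 : ℝ) ≤ lam := by linarith
  have h1l : (0 : ℝ) < 1 - lam := by linarith
  by_cases hrun : ∀ n, 1 ≤ n → n ≤ k → s n = -1
  · left
    set A := ∑' m : ℕ, s m * lam ^ m with hAdef
    have hA : A = (∑ n ∈ Finset.range (k + 1), s n * lam ^ n)
        + ∑' m : ℕ, s (m + (k + 1)) * lam ^ (m + (k + 1)) :=
      (Summable.sum_add_tsum_nat_add (k + 1) (summable_aux lam hl0 hu s hsb)).symm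
    have hfin : ∑ n ∈ Finset.range (k + 1), s n * lam ^ n
        = (1 - 2 * lam + lam ^ (k + 1)) / (1 - lam) := by
      rw [run_sum lam s hs0 k hrun, geom_sum_eq (ne_of_lt hu)]
      have hne : lam - 1 ≠ 0 := by linarith
      have hne2 : (1 : ℝ) - lam ≠ 0 := by linarith
      field_simp
      ring
    have htail := tail_bound lam hl0 hu s hsb (k + 1)
    have h1 : ∑' m : ℕ, s (m + (k + 1)) * lam ^ (m + (k + 1)) ≤ lam ^ (k + 1) * (1 - lam)⁻¹ :=
      (abs_le.mp htail).2
    have hAle : A ≤ (1 - 2 * lam + 2 * lam ^ (k + 1)) / (1 - lam) := by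
      rw [hA, hfin]
      have he : (1 - 2 * lam + lam ^ (k + 1)) / (1 - lam) + lam ^ (k + 1) * (1 - lam)⁻¹
          = (1 - 2 * lam + 2 * lam ^ (k + 1)) / (1 - lam) := by
        rw [← div_eq_mul_inv, ← add_div]
        ring_nf
      linarith
    have hneg : (1 - 2 * lam + 2 * lam ^ (k + 1)) / (1 - lam)
        ≤ -((2 * lam - 1) / (2 * (1 - lam))) := by
      have hne2 : (1 : ℝ) - lam ≠ 0 := by linarith
      have he : -((2 * lam - 1) / (2 * (1 - lam))) = (1 - 2 * lam) / 2 / (1 - lam) := by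
        field_simp
        ring
      rw [he, div_le_div_iff₀ h1l h1l]
      nlinarith [mul_lt_mul_of_pos_right hk h1l]
    have hfinal : A ≤ -((2 * lam - 1) / (2 * (1 - lam))) := le_trans hAle hneg
    calc (2 * lam - 1) / (2 * (1 - lam)) ≤ -A := by linarith
      _ ≤ |A| := neg_le_abs A
  · right
    classical
    push_neg at hrun
    obtain ⟨n0, hn01, hn0k, hn0ne⟩ := hrun
    have hex : ∃ n, 1 ≤ n ∧ n ≤ k ∧ s n ≠ -1 := ⟨n0, hn01, hn0k, hn0ne⟩
    set m := Nat.find hex with hmdef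
    obtain ⟨hm1, hmk, hmne⟩ := Nat.find_spec hex
    have hrunm : ∀ n, 1 ≤ n → n ≤ m - 1 → s n = -1 := by
      intro n h1n hnm
      have hnm' : n < m := by omega
      have := Nat.find_min hex hnm'
      by_contra hc
      exact this ⟨h1n, by omega, hc⟩
    have hsm : 0 ≤ s m := (hsv m).resolve_left hmne
    have q0 : (0 : ℝ) ≤ 1/2 := by norm_num
    have q1 : (1/2 : ℝ) < 1 := by norm_num
    set B := ∑' m : ℕ, s m * (1/2 : ℝ) ^ m with hBdef
    have hB : B = (∑ n ∈ Finset.range (m + 1), s n * (1/2 : ℝ) ^ n)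
        + ∑' n : ℕ, s (n + (m + 1)) * (1/2 : ℝ) ^ (n + (m + 1)) :=
      (Summable.sum_add_tsum_nat_add (m + 1) (summable_aux (1/2) q0 q1 s hsb)).symm
    have hfin : ∑ n ∈ Finset.range m, s n * (1/2 : ℝ) ^ n = 2 * (1/2 : ℝ) ^ m := by
      have hm' : m - 1 + 1 = m := by omega
      have hrs := run_sum (1/2) s hs0 (m - 1) hrunm
      rw [hm'] at hrs
      rw [hrs, geom_sum_eq (by norm_num : (1/2 : ℝ) ≠ 1)]
      have : ((1/2 : ℝ) ^ m - 1) / (1/2 - 1) = 2 - 2 * (1/2 : ℝ) ^ m := by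
        rw [div_eq_iff (by norm_num : (1/2 : ℝ) - 1 ≠ 0)]
        ring
      rw [this]
      ring
    have htail := tail_bound (1/2 : ℝ) q0 q1 s hsb (m + 1)
    have htail' : -((1/2 : ℝ) ^ m) ≤ ∑' n : ℕ, s (n + (m + 1)) * (1/2 : ℝ) ^ (n + (m + 1)) := by
      have h2 : (1/2 : ℝ) ^ (m + 1) * (1 - 1/2 : ℝ)⁻¹ = (1/2 : ℝ) ^ m := by
        rw [show ((1 : ℝ) - 1/2)⁻¹ = 2 by norm_num, pow_succ]; ring
      rw [h2] at htail
      exact (abs_le.mp htail).1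
    have hBge : (1/2 : ℝ) ^ m ≤ B := by
      rw [hB, Finset.sum_range_succ, hfin]
      have hsm' : 0 ≤ s m * (1/2 : ℝ) ^ m := mul_nonneg hsm (pow_nonneg q0 m)
      linarith
    calc (1/2 : ℝ) ^ k ≤ (1/2 : ℝ) ^ m := pow_le_pow_of_le_one q0 q1.le hmk
      _ ≤ B := hBge

lemma core (lam : ℝ) (hl : (1/2 : ℝ) < lam) (hu : lam < 1) (k : ℕ)
    (hk : lam ^ (k + 1) < (2 * lam - 1) / 4) (i j : ℕ → Fin 2) (r : ℕ)
    (hpre : ∀ m < r, i m = j m) (hir : i r = 1) (hjr : j r = 0) :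
    min ((2 * lam - 1) / 2) ((1/2 : ℝ) ^ (k + 1)) * (1/2 : ℝ) ^ r
      ≤ dE (piPU lam i) (piPU lam j) := by
  have hl0 : (0 : ℝ) ≤ lam := by linarith
  have h1l : (0 : ℝ) < 1 - lam := by linarith
  have q0 : (0 : ℝ) ≤ 1/2 := by norm_num
  have q1 : (1/2 : ℝ) < 1 := by norm_num
  set s : ℕ → ℝ := fun m => ((i (m + r) : ℕ) : ℝ) - ((j (m + r) : ℕ) : ℝ) with hsdef
  have hval : ∀ (f : ℕ → Fin 2) (n : ℕ), (f n : ℕ) = 0 ∨ (f n : ℕ) = 1 := by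
    intro f n
    have := (f n).isLt
    omega
  have hs0 : s 0 = 1 := by
    simp only [hsdef, Nat.zero_add, hir, hjr]
    norm_num
  have hsb : ∀ m, |s m| ≤ 1 := by
    intro m
    rcases hval i (m + r) with h1 | h1 <;> rcases hval j (m + r) with h2 | h2 <;>
      simp [hsdef, h1, h2]
  have hsv : ∀ m, s m = -1 ∨ 0 ≤ s m := by
    intro m
    rcases hval i (m + r) with h1 | h1 <;> rcases hval j (m + r) with h2 | h2 <;>
      simp [hsdef, h1, h2] <;> norm_num
  -- difference sequence
  set d : ℕ → ℝ := fun n => ((i n : ℕ) : ℝ) - ((j n : ℕ) : ℝ) with hddef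
  have hd0 : ∀ n < r, d n = 0 := by
    intro n hn
    simp [hddef, hpre n hn]
  have hdb : ∀ n, |d n| ≤ 1 := by
    intro n
    rcases hval i n with h1 | h1 <;> rcases hval j n with h2 | h2 <;>
      simp [hddef, h1, h2]
  -- summability of coordinate series
  have hsumx : ∀ (f : ℕ → Fin 2), Summable (fun n : ℕ => ((f n : ℕ) : ℝ) * (1 - lam) * lam ^ n) := by
    intro f
    apply summable_aux lam hl0 hu (fun n => ((f n : ℕ) : ℝ) * (1 - lam))
    intro n
    show |((f n : ℕ) : ℝ) * (1 - lam)| ≤ 1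
    rcases hval f n with h1 | h1 <;> rw [h1] <;>
      simp [abs_of_nonneg h1l.le] <;> linarith
  have hsumy : ∀ (f : ℕ → Fin 2), Summable (fun n : ℕ => ((f n : ℕ) : ℝ) * (1/2 : ℝ) ^ (n + 1)) := by
    intro f
    apply Summable.congr (summable_aux (1/2) q0 q1 (fun n => ((f n : ℕ) : ℝ) * (1/2)) ?_)
    · intro n
      show ((f n : ℕ) : ℝ) * (1/2) * (1/2 : ℝ) ^ n = ((f n : ℕ) : ℝ) * (1/2 : ℝ) ^ (n + 1)
      ring
    · intro n
      show |((f n : ℕ) : ℝ) * (1/2)| ≤ 1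
      rcases hval f n with h1 | h1 <;> rw [h1] <;> push_cast <;>
        rw [abs_of_nonneg (by norm_num)] <;> norm_num
  -- x-coordinate difference
  set A := ∑' m : ℕ, s m * lam ^ m with hAdef
  set B := ∑' m : ℕ, s m * (1/2 : ℝ) ^ m with hBdef
  have hdx : piI lam i - piI lam j = (1 - lam) * lam ^ r * A := by
    have hsub : piI lam i - piI lam j
        = ∑' n : ℕ, (d n * (1 - lam)) * lam ^ n := by
      rw [piI, piI, ← Summable.tsum_sub (hsumx i) (hsumx j)]
      exact tsum_congr fun n => by simp [hddef]; ring
    rw [hsub]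
    have hsumd : Summable (fun n : ℕ => (d n * (1 - lam)) * lam ^ n) := by
      apply summable_aux lam hl0 hu
      intro n
      rw [abs_mul, abs_of_nonneg h1l.le]
      calc |d n| * (1 - lam) ≤ 1 * 1 := by
            apply mul_le_mul (hdb n) (by linarith) h1l.le zero_le_one
        _ = 1 := one_mul 1
    rw [← Summable.sum_add_tsum_nat_add r hsumd]
    have hz : ∑ n ∈ Finset.range r, (d n * (1 - lam)) * lam ^ n = 0 :=
      Finset.sum_eq_zero fun n hn => by rw [hd0 n (Finset.mem_range.mp hn)]; ring
    rw [hz, zero_add, hAdef, ← tsum_mul_left]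
    exact tsum_congr fun n => by
      show (d (n + r) * (1 - lam)) * lam ^ (n + r) = (1 - lam) * lam ^ r * (s n * lam ^ n)
      rw [pow_add]
      simp only [hsdef, hddef]
      ring
  -- y-coordinate difference
  have hdy : (piPU lam i).2 - (piPU lam j).2 = (1/2 : ℝ) ^ (r + 1) * B := by
    have hsub : (piPU lam i).2 - (piPU lam j).2
        = ∑' n : ℕ, (d n * (1/2 : ℝ)) * (1/2 : ℝ) ^ n := by
      rw [piPU, piPU, ← Summable.tsum_sub (hsumy i) (hsumy j)]
      exact tsum_congr fun n => by simp [hddef]; ring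
    rw [hsub]
    have hsumd : Summable (fun n : ℕ => (d n * (1/2 : ℝ)) * (1/2 : ℝ) ^ n) := by
      apply summable_aux (1/2) q0 q1
      intro n
      rw [abs_mul, abs_of_nonneg q0]
      have := hdb n
      nlinarith [abs_nonneg (d n)]
    rw [← Summable.sum_add_tsum_nat_add r hsumd]
    have hz : ∑ n ∈ Finset.range r, (d n * (1/2 : ℝ)) * (1/2 : ℝ) ^ n = 0 :=
      Finset.sum_eq_zero fun n hn => by rw [hd0 n (Finset.mem_range.mp hn)]; ring
    rw [hz, zero_add, hBdef, ← tsum_mul_left]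
    exact tsum_congr fun n => by
      show (d (n + r) * (1/2 : ℝ)) * (1/2 : ℝ) ^ (n + r)
          = (1/2 : ℝ) ^ (r + 1) * (s n * (1/2 : ℝ) ^ n)
      rw [pow_add]
      simp only [hsdef, hddef]
      ring
  -- case analysis
  rcases key lam hl hu k hk s hs0 hsb hsv with hcase | hcase
  · -- x-coordinate gives the bound
    have hfst : (piPU lam i).1 - (piPU lam j).1 = (1 - lam) * lam ^ r * A := hdx
    have habs : |(piPU lam i).1 - (piPU lam j).1| = (1 - lam) * lam ^ r * |A| := by
      rw [hfst, abs_mul, abs_of_nonneg (mul_nonneg h1l.le (pow_nonneg hl0 r))]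
    have heq : (1 - lam) * lam ^ r * ((2 * lam - 1) / (2 * (1 - lam)))
        = (2 * lam - 1) / 2 * lam ^ r := by
      have hne2 : (1 : ℝ) - lam ≠ 0 := by linarith
      field_simp
    calc min ((2 * lam - 1) / 2) ((1/2 : ℝ) ^ (k + 1)) * (1/2 : ℝ) ^ r
        ≤ (2 * lam - 1) / 2 * (1/2 : ℝ) ^ r :=
          mul_le_mul_of_nonneg_right (min_le_left _ _) (pow_nonneg q0 r)
      _ ≤ (2 * lam - 1) / 2 * lam ^ r :=
          mul_le_mul_of_nonneg_left (pow_le_pow_left₀ q0 hl.le r) (by linarith)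
      _ = (1 - lam) * lam ^ r * ((2 * lam - 1) / (2 * (1 - lam))) := heq.symm
      _ ≤ (1 - lam) * lam ^ r * |A| :=
          mul_le_mul_of_nonneg_left hcase (mul_nonneg h1l.le (pow_nonneg hl0 r))
      _ = |(piPU lam i).1 - (piPU lam j).1| := habs.symm
      _ ≤ dE (piPU lam i) (piPU lam j) := dE_ge_abs_fst _ _
  · -- y-coordinate gives the bound
    calc min ((2 * lam - 1) / 2) ((1/2 : ℝ) ^ (k + 1)) * (1/2 : ℝ) ^ r
        ≤ (1/2 : ℝ) ^ (k + 1) * (1/2 : ℝ) ^ r :=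
          mul_le_mul_of_nonneg_right (min_le_right _ _) (pow_nonneg q0 r)
      _ = (1/2 : ℝ) ^ (r + 1) * (1/2 : ℝ) ^ k := by ring
      _ ≤ (1/2 : ℝ) ^ (r + 1) * B :=
          mul_le_mul_of_nonneg_left hcase (pow_nonneg q0 _)
      _ = (piPU lam i).2 - (piPU lam j).2 := hdy.symm
      _ ≤ |(piPU lam i).2 - (piPU lam j).2| := le_abs_self _
      _ ≤ dE (piPU lam i) (piPU lam j) := dE_ge_abs_snd _ _

theorem statement0 (lam : ℝ) (hlam : lam ∈ Set.Ioo (1 / 2 : ℝ) 1) :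
    ∃ C ∈ Set.Ioo (0 : ℝ) 1, ∀ (i j : ℕ → Fin 2) (r : ℕ),
      (∀ m < r, i m = j m) → i r ≠ j r →
      C * (1 / 2 : ℝ) ^ r ≤ dE (piPU lam i) (piPU lam j) := by
  obtain ⟨hl, hu⟩ := hlam
  have hpos : (0 : ℝ) < (2 * lam - 1) / 4 := by linarith
  obtain ⟨k, hk⟩ := exists_pow_lt_of_lt_one hpos hu
  have hk' : lam ^ (k + 1) < (2 * lam - 1) / 4 :=
    lt_of_le_of_lt (pow_le_pow_of_le_one (by linarith) hu.le (Nat.le_succ k)) hk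
  refine ⟨min ((2 * lam - 1) / 2) ((1/2 : ℝ) ^ (k + 1)), ⟨?_, ?_⟩, ?_⟩
  · apply lt_min
    · linarith
    · positivity
  · calc min ((2 * lam - 1) / 2) ((1/2 : ℝ) ^ (k + 1)) ≤ (1/2 : ℝ) ^ (k + 1) :=
        min_le_right _ _
      _ < 1 := pow_lt_one₀ (by norm_num) (by norm_num) (Nat.succ_ne_zero k)
  · intro i j r hpre hne
    have h2 : ∀ x : Fin 2, x = 0 ∨ x = 1 := by decide
    rcases h2 (i r) with h | h <;> rcases h2 (j r) with h' | h'
    · exact absurd (h.trans h'.symm) hne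
    · rw [dE_comm]
      exact core lam hl hu k hk' j i r (fun m hm => (hpre m hm).symm) h' h
    · exact core lam hl hu k hk' i j r hpre h h'
    · exact absurd (h.trans h'.symm) hne
end

section
/- Suppose λ ∈ (1/2, 1) and there exist C₁ > 0 and ε ∈ (0,1) such that the Bernoulli convolution measure ν_λ satisfies ν_λ(B(x,r)) ≤ C₁ r^{1-ε} for all x ∈ [0,1] and r > 0. Then for any ρ > 0 there is a constant C > 0 such that for all x ∈ [0,1] and k ∈ ℕ, the number of words i ∈ {0,1}^k for which π_I([i]) intersects [x − ρλ^k, x + ρλ^k] is at most C·2^k·λ^{k(1−ε)}. -/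
open MeasureTheory Filter Set Real

/-- Binary digits of a real number: under Lebesgue measure on [0,1) these are
i.i.d. fair coin flips. -/
noncomputable def digitSeq (x : ℝ) (n : ℕ) : Fin 2 :=
  if ⌊x * 2 ^ (n + 1)⌋ % 2 = 1 then 1 else 0

/-- The (1/2,1/2)-Bernoulli measure on {0,1}^ℕ. -/
noncomputable def bern : Measure (ℕ → Fin 2) :=
  Measure.map digitSeq (volume.restrict (Set.Ico (0 : ℝ) 1))

/-- The Bernoulli convolution ν_λ: push-forward of the Bernoulli measure under π_I. -/
noncomputable def nuLam (lam : ℝ) : Measure ℝ := Measure.map (piI lam) bern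

/-!
A word `w` of length `k` has a cylinder `[w]` of Bernoulli mass at least `2⁻ᵏ`: since `bern` is
the law of the binary digits of a uniform point of `[0,1)`, the digit map sends a dyadic interval
of length `2⁻ᵏ` into `[w]`. The map `π_I` sends `[w]` into an interval of length `λᵏ`; if that
interval meets `[x - ρλᵏ, x + ρλᵏ]`, then `π_I([w]) ⊆ [x - (1 + ρ)λᵏ, x + (1 + ρ)λᵏ]`. The
cylinders being disjoint, `2⁻ᵏ` times the number of such words is at most `ν_λ` of this interval,
hence at most `C₁ (1 + ρ)^(1-ε) λ^(k(1-ε))`.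
-/

section CodingMap

variable {lam : ℝ}

lemma piI_term_le (h0 : 0 ≤ lam) (h1 : lam ≤ 1) (i : ℕ → Fin 2) (n : ℕ) :
    ((i n : ℕ) : ℝ) * (1 - lam) * lam ^ n ≤ (1 - lam) * lam ^ n := by
  have hi : ((i n : ℕ) : ℝ) ≤ 1 := by exact_mod_cast (i n).is_le
  have : 0 ≤ (1 - lam) * lam ^ n := by positivity
  nlinarith

lemma summable_piI_terms (h0 : 0 ≤ lam) (h1 : lam < 1) (i : ℕ → Fin 2) :
    Summable (fun n => ((i n : ℕ) : ℝ) * (1 - lam) * lam ^ n) :=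
  .of_nonneg_of_le (fun n => by positivity) (piI_term_le h0 h1.le i)
    ((summable_geometric_of_lt_one h0 h1).mul_left (1 - lam))

lemma piI_nonneg (h0 : 0 ≤ lam) (h1 : lam ≤ 1) (i : ℕ → Fin 2) : 0 ≤ piI lam i :=
  tsum_nonneg fun n => by positivity

lemma piI_le_one (h0 : 0 ≤ lam) (h1 : lam < 1) (i : ℕ → Fin 2) : piI lam i ≤ 1 :=
  calc piI lam i ≤ ∑' n : ℕ, (1 - lam) * lam ^ n :=
        (summable_piI_terms h0 h1 i).tsum_le_tsum (piI_term_le h0 h1.le i)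
          ((summable_geometric_of_lt_one h0 h1).mul_left (1 - lam))
    _ = 1 := by
        rw [tsum_mul_left, tsum_geometric_of_lt_one h0 h1, mul_inv_cancel₀ (by linarith)]

lemma piI_eq_sum_add_shift (h0 : 0 ≤ lam) (h1 : lam < 1) (k : ℕ) (i : ℕ → Fin 2) :
    piI lam i = ∑ m ∈ Finset.range k, ((i m : ℕ) : ℝ) * (1 - lam) * lam ^ m
      + lam ^ k * piI lam (fun n => i (n + k)) := by
  rw [piI, ← (summable_piI_terms h0 h1 i).sum_add_tsum_nat_add k, piI, ← tsum_mul_left]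
  congr 2 with n
  ring

lemma measurable_piI (h0 : 0 ≤ lam) (h1 : lam < 1) : Measurable (piI lam) := by
  refine measurable_of_tendsto_metrizable (f := fun K i =>
    ∑ m ∈ Finset.range K, ((i m : ℕ) : ℝ) * (1 - lam) * lam ^ m) (fun K => ?_) ?_
  · exact Finset.measurable_sum _ fun m _ =>
      (measurable_of_countable fun b : Fin 2 => ((b : ℕ) : ℝ) * (1 - lam) * lam ^ m).comp
        (measurable_pi_apply m)
  · exact tendsto_pi_nhds.mpr fun i => (summable_piI_terms h0 h1 i).hasSum.tendsto_sum_nat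

end CodingMap

section Cylinders

variable {k : ℕ}

def wordCylinder (w : Fin k → Fin 2) : Set (ℕ → Fin 2) := {i | ∀ m : Fin k, i m = w m}

def cylinderLeft (lam : ℝ) (w : Fin k → Fin 2) : ℝ :=
  ∑ m : Fin k, ((w m : ℕ) : ℝ) * (1 - lam) * lam ^ (m : ℕ)

lemma measurableSet_wordCylinder (w : Fin k → Fin 2) : MeasurableSet (wordCylinder w) := by
  rw [wordCylinder, Set.ofPred_forall]
  exact .iInter fun m => measurable_pi_apply _ (measurableSet_singleton _)

lemma pairwiseDisjoint_wordCylinder (s : Set (Fin k → Fin 2)) :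
    s.PairwiseDisjoint wordCylinder := by
  intro w _ w' _ hne
  refine Set.disjoint_left.mpr fun i hi hi' => hne (funext fun m => ?_)
  rw [← hi m, hi' m]

lemma piI_mem_Icc_of_mem_wordCylinder {lam : ℝ} (h0 : 0 ≤ lam) (h1 : lam < 1)
    {w : Fin k → Fin 2} {i : ℕ → Fin 2} (hi : i ∈ wordCylinder w) :
    piI lam i ∈ Set.Icc (cylinderLeft lam w) (cylinderLeft lam w + lam ^ k) := by
  have hleft : ∑ m ∈ Finset.range k, ((i m : ℕ) : ℝ) * (1 - lam) * lam ^ m =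
      cylinderLeft lam w := by
    rw [← Fin.sum_univ_eq_sum_range, cylinderLeft]
    exact Finset.sum_congr rfl fun m _ => by rw [hi m]
  have htail0 := piI_nonneg h0 h1.le (fun n => i (n + k))
  have htail1 := piI_le_one h0 h1 (fun n => i (n + k))
  have hpow : 0 ≤ lam ^ k := pow_nonneg h0 k
  rw [piI_eq_sum_add_shift h0 h1 k, hleft]
  constructor <;> nlinarith

end Cylinders

section Digits

/-- The integer `⌊x * 2 ^ k⌋` shared by all `x` whose first `k` binary digits are those of `w`. -/
def dyadicIndex (w : ℕ → Fin 2) : ℕ → ℤ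
  | 0 => 0
  | k + 1 => 2 * dyadicIndex w k + (w k : ℕ)

variable {w : ℕ → Fin 2} {x : ℝ}

lemma floor_mul_two_pow_eq_of_succ {k : ℕ}
    (h : ⌊x * 2 ^ (k + 1)⌋ = dyadicIndex w (k + 1)) : ⌊x * 2 ^ k⌋ = dyadicIndex w k := by
  have hw : ((w k : ℕ) : ℝ) ≤ 1 := by exact_mod_cast (w k).is_le
  rw [Int.floor_eq_iff, dyadicIndex, pow_succ] at h
  push_cast at h
  rw [Int.floor_eq_iff]
  constructor <;> nlinarith [Nat.cast_nonneg (α := ℝ) (w k : ℕ)]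

lemma floor_mul_two_pow_eq_of_le {k m : ℕ} (h : ⌊x * 2 ^ k⌋ = dyadicIndex w k) (hm : m ≤ k) :
    ⌊x * 2 ^ m⌋ = dyadicIndex w m := by
  induction k with
  | zero => rwa [Nat.le_zero.mp hm]
  | succ k ih =>
    rcases Nat.of_le_succ hm with hm | rfl
    · exact ih (floor_mul_two_pow_eq_of_succ h) hm
    · exact h

lemma digitSeq_eq_of_floor {m : ℕ} (h : ⌊x * 2 ^ (m + 1)⌋ = dyadicIndex w (m + 1)) :
    digitSeq x m = w m := by
  rw [digitSeq, h, dyadicIndex]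
  rcases Fin.exists_fin_two.mp ⟨w m, rfl⟩ with hw | hw <;> simp [hw]

lemma volume_floor_mul_two_pow_eq (k : ℕ) (n : ℤ) :
    volume {x : ℝ | ⌊x * 2 ^ k⌋ = n} = ENNReal.ofReal ((2 ^ k)⁻¹) := by
  have h2 : (0 : ℝ) < 2 ^ k := by positivity
  have hset : {x : ℝ | ⌊x * 2 ^ k⌋ = n} = Set.Ico ((n : ℝ) / 2 ^ k) ((n + 1) / 2 ^ k) := by
    ext x
    simp only [Set.mem_ofPred_eq, Int.floor_eq_iff, Set.mem_Ico, div_le_iff₀ h2, lt_div_iff₀ h2]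
  rw [hset, Real.volume_Ico, ← sub_div, add_sub_cancel_left, one_div]

end Digits

lemma measurable_digitSeq : Measurable digitSeq :=
  measurable_pi_lambda _ fun _ =>
    (measurable_of_countable fun z : ℤ => if z % 2 = 1 then (1 : Fin 2) else 0).comp
      (measurable_mul_const _).floor

lemma bern_wordCylinder_ge {k : ℕ} (w : Fin k → Fin 2) :
    ENNReal.ofReal ((2 ^ k)⁻¹) ≤ bern (wordCylinder w) := by
  set e : ℕ → Fin 2 := fun n => if h : n < k then w ⟨n, h⟩ else 0
  have hsub : {x : ℝ | ⌊x * 2 ^ k⌋ = dyadicIndex e k} ⊆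
      digitSeq ⁻¹' wordCylinder w ∩ Set.Ico 0 1 := by
    intro x hx
    refine ⟨fun m => ?_, ?_⟩
    · simpa [e] using digitSeq_eq_of_floor (floor_mul_two_pow_eq_of_le hx m.isLt)
    · simpa [dyadicIndex] using floor_mul_two_pow_eq_of_le hx (Nat.zero_le k)
  calc ENNReal.ofReal ((2 ^ k)⁻¹) = volume {x : ℝ | ⌊x * 2 ^ k⌋ = dyadicIndex e k} :=
        (volume_floor_mul_two_pow_eq k _).symm
    _ ≤ volume (digitSeq ⁻¹' wordCylinder w ∩ Set.Ico 0 1) := measure_mono hsub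
    _ ≤ volume.restrict (Set.Ico 0 1) (digitSeq ⁻¹' wordCylinder w) :=
        Measure.le_restrict_apply _ _
    _ ≤ bern (wordCylinder w) := Measure.le_map_apply measurable_digitSeq.aemeasurable _

lemma card_mul_le_measure_of_pairwiseDisjoint {α ι : Type*} [MeasurableSpace α]
    {μ : Measure α} {s : Finset ι} {A : ι → Set α} {B : Set α} {c : ENNReal}
    (hmeas : ∀ i ∈ s, MeasurableSet (A i)) (hdisj : (s : Set ι).PairwiseDisjoint A)
    (hc : ∀ i ∈ s, c ≤ μ (A i)) (hB : ∀ i ∈ s, A i ⊆ B) : s.card * c ≤ μ B :=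
  calc s.card * c = ∑ i ∈ s, c := by rw [Finset.sum_const, nsmul_eq_mul]
    _ ≤ ∑ i ∈ s, μ (A i) := Finset.sum_le_sum hc
    _ = μ (⋃ i ∈ s, A i) := (measure_biUnion_finset hdisj hmeas).symm
    _ ≤ μ B := measure_mono (Set.iUnion₂_subset hB)

lemma natCard_near_mul_le_nuLam {lam : ℝ} (h0 : 0 ≤ lam) (h1 : lam < 1) (x ρ : ℝ) (k : ℕ) :
    (Nat.card {w : Fin k → Fin 2 //
        (Set.Icc (cylinderLeft lam w) (cylinderLeft lam w + lam ^ k) ∩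
          Set.Icc (x - ρ * lam ^ k) (x + ρ * lam ^ k)).Nonempty} : ENNReal) *
        ENNReal.ofReal ((2 ^ k)⁻¹) ≤
      nuLam lam (Set.Icc (x - (1 + ρ) * lam ^ k) (x + (1 + ρ) * lam ^ k)) := by
  classical
  rw [Nat.card_eq_fintype_card, Fintype.card_subtype, nuLam,
    Measure.map_apply (measurable_piI h0 h1) measurableSet_Icc]
  refine card_mul_le_measure_of_pairwiseDisjoint (fun w _ => measurableSet_wordCylinder w)
    (pairwiseDisjoint_wordCylinder _) (fun w _ => bern_wordCylinder_ge w) fun w hw i hi => ?_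
  obtain ⟨z, ⟨hz1, hz2⟩, hz3, hz4⟩ := (Finset.mem_filter.mp hw).2
  obtain ⟨hi1, hi2⟩ := piI_mem_Icc_of_mem_wordCylinder h0 h1 hi
  constructor <;> linarith

theorem statement2_general (lam ε C₁ : ℝ) (hlam : lam ∈ Set.Ioo (1 / 2 : ℝ) 1)
    (hC₁ : 0 < C₁)
    (hfrost : ∀ x ∈ Set.Icc (0 : ℝ) 1, ∀ r : ℝ, 0 < r →
      nuLam lam (Set.Icc (x - r) (x + r)) ≤ ENNReal.ofReal (C₁ * r ^ (1 - ε))) :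
    ∀ ρ : ℝ, 0 < ρ → ∃ C : ℝ, 0 < C ∧ ∀ x ∈ Set.Icc (0 : ℝ) 1, ∀ k : ℕ,
      (Nat.card {w : Fin k → Fin 2 //
          (Set.Icc (∑ m : Fin k, ((w m : ℕ) : ℝ) * (1 - lam) * lam ^ (m : ℕ))
              ((∑ m : Fin k, ((w m : ℕ) : ℝ) * (1 - lam) * lam ^ (m : ℕ)) + lam ^ k) ∩
            Set.Icc (x - ρ * lam ^ k) (x + ρ * lam ^ k)).Nonempty} : ℝ) ≤
        C * 2 ^ k * lam ^ ((k : ℝ) * (1 - ε)) := by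
  intro ρ hρ
  have hpos : 0 < lam := by linarith [hlam.1]
  have h0 := hpos.le
  refine ⟨C₁ * (1 + ρ) ^ (1 - ε), by positivity, fun x hx k => ?_⟩
  have hr : 0 < (1 + ρ) * lam ^ k := by positivity
  have hmass := (natCard_near_mul_le_nuLam h0 hlam.2 x ρ k).trans (hfrost x hx _ hr)
  rw [← ENNReal.ofReal_natCast, ← ENNReal.ofReal_mul (Nat.cast_nonneg _),
    ENNReal.ofReal_le_ofReal_iff (by positivity), Real.mul_rpow (by linarith) (pow_nonneg h0 k),
    ← Real.rpow_natCast_mul h0, ← div_eq_mul_inv, div_le_iff₀ (by positivity)] at hmass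
  exact hmass.trans_eq (by ring)

theorem statement2 (lam ε C₁ : ℝ) (hlam : lam ∈ Set.Ioo (1 / 2 : ℝ) 1)
    (hε : ε ∈ Set.Ioo (0 : ℝ) 1) (hC₁ : 0 < C₁)
    (hfrost : ∀ x ∈ Set.Icc (0 : ℝ) 1, ∀ r : ℝ, 0 < r →
      nuLam lam (Set.Icc (x - r) (x + r)) ≤ ENNReal.ofReal (C₁ * r ^ (1 - ε))) :
    ∀ ρ : ℝ, 0 < ρ → ∃ C : ℝ, 0 < C ∧ ∀ x ∈ Set.Icc (0 : ℝ) 1, ∀ k : ℕ,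
      (Nat.card {w : Fin k → Fin 2 //
          (Set.Icc (∑ m : Fin k, ((w m : ℕ) : ℝ) * (1 - lam) * lam ^ (m : ℕ))
              ((∑ m : Fin k, ((w m : ℕ) : ℝ) * (1 - lam) * lam ^ (m : ℕ)) + lam ^ k) ∩
            Set.Icc (x - ρ * lam ^ k) (x + ρ * lam ^ k)).Nonempty} : ℝ) ≤
        C * 2 ^ k * lam ^ ((k : ℝ) * (1 - ε)) :=
  statement2_general lam ε C₁ hlam hC₁ hfrost
end

section
/- Fix γ ∈ (0,1), λ ∈ (1/2, 1), z ∈ F. For s ≥ 0, if s > −log 2 / log(λγ), then the s-dimensional Hausdorff measure of R*(z, λ, γ) is zero; consequently dim_H R*(z, λ, γ) ≤ −log 2 / log(λγ). -/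
open MeasureTheory Filter Set Real
open scoped ENNReal NNReal Topology

/-- The expanding map E on the attractor, with the convention E = f₀⁻¹ on overlaps
(the vertical coordinate decides the branch). -/
noncomputable def Emap (lam : ℝ) (p : ℝ × ℝ) : ℝ × ℝ :=
  if p.2 ≤ 1 / 2 then (p.1 / lam, 2 * p.2) else ((p.1 - (1 - lam)) / lam, 2 * p.2 - 1)

/-- The cube Q(z,r) of side 2r centred at z. -/
def cube (z : ℝ × ℝ) (r : ℝ) : Set (ℝ × ℝ) := {p | |p.1 - z.1| ≤ r ∧ |p.2 - z.2| ≤ r}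

/-- The shrinking target set R*(z, λ, γ). -/
noncomputable def Rstar (lam γ : ℝ) (z : ℝ × ℝ) : Set (ℝ × ℝ) :=
  {x ∈ Set.range (piPU lam) | ∃ᶠ n in atTop, (Emap lam)^[n] x ∈ cube z (γ ^ n)}

noncomputable def ctr (lam : ℝ) (z : ℝ × ℝ) (n : ℕ) (ω : Fin n → Fin 2) : ℝ × ℝ :=
  (lam ^ n * z.1 + ∑ j : Fin n, ((ω j : ℕ) : ℝ) * (1 - lam) * lam ^ (j : ℕ),
   z.2 / 2 ^ n + ∑ j : Fin n, ((ω j : ℕ) : ℝ) * (1 / 2 : ℝ) ^ ((j : ℕ) + 1))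

-- diam of metric closed ball in emetric terms
lemma ediam_closedBall {X : Type*} [PseudoMetricSpace X] (x : X) (r : ℝ) :
    EMetric.diam (Metric.closedBall x r) ≤ ENNReal.ofReal (2 * r) := by
  refine EMetric.diam_le fun a ha b hb => ?_
  rw [edist_dist]
  exact ENNReal.ofReal_le_ofReal
    ((dist_triangle a x b).trans (by
      have := Metric.mem_closedBall.1 ha
      have := Metric.mem_closedBall.1 hb
      rw [dist_comm x b] at *
      linarith [Metric.mem_closedBall.1 ha, Metric.mem_closedBall.1 hb]))


lemma geo_tail (q : ℝ≥0∞) (N : ℕ) :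
    (∑' n : ℕ, if N ≤ n then q ^ n else 0) = q ^ N * (1 - q)⁻¹ := by
  have hinj : Function.Injective (fun n : ℕ => n + N) := add_left_injective N
  have hsupp : Function.support (fun n : ℕ => if N ≤ n then q ^ n else 0) ⊆
      Set.range (fun n : ℕ => n + N) := by
    intro n hn
    simp only [Function.mem_support, ne_eq, ite_eq_right_iff, not_forall] at hn
    obtain ⟨hNn, -⟩ := hn
    exact ⟨n - N, by simp only []; omega⟩
  rw [← Function.Injective.tsum_eq hinj hsupp]
  simp only [le_add_iff_nonneg_left, zero_le, if_true]
  calc (∑' n : ℕ, q ^ (n + N)) = ∑' n : ℕ, q ^ n * q ^ N := by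
        refine tsum_congr fun n => by rw [pow_add]
  _ = (1 - q)⁻¹ * q ^ N := by rw [ENNReal.tsum_mul_right, ENNReal.tsum_geometric]
  _ = q ^ N * (1 - q)⁻¹ := mul_comm _ _

lemma expand (lam : ℝ) (hlam : lam ≠ 0) : ∀ (n : ℕ) (p : ℝ × ℝ), ∃ ω : ℕ → Fin 2,
    p.1 = lam ^ n * ((Emap lam)^[n] p).1
        + ∑ j ∈ Finset.range n, ((ω j : ℕ) : ℝ) * (1 - lam) * lam ^ j ∧
    p.2 = ((Emap lam)^[n] p).2 / 2 ^ n
        + ∑ j ∈ Finset.range n, ((ω j : ℕ) : ℝ) * (1 / 2 : ℝ) ^ (j + 1) := by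
  intro n
  induction n with
  | zero => intro p; exact ⟨fun _ => 0, by simp, by simp⟩
  | succ n ih =>
    intro p
    obtain ⟨ω, h1, h2⟩ := ih (Emap lam p)
    by_cases h : p.2 ≤ 1 / 2
    case pos =>
      have hE1 : p.1 = lam * (Emap lam p).1 + ((0 : ℕ) : ℝ) * (1 - lam) := by
        simp only [Emap, if_pos h]; field_simp; simp
      have hE2 : p.2 = ((Emap lam p).2 + ((0 : ℕ) : ℝ)) / 2 := by
        simp only [Emap, if_pos h]; ring
      refine ⟨fun j => Nat.rec 0 (fun k _ => ω k) j, ?_, ?_⟩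
      · rw [Function.iterate_succ_apply, Finset.sum_range_succ']
        have key : ∑ j ∈ Finset.range n, ((ω j : ℕ):ℝ)*(1-lam)*lam^(j+1)
            = lam * ∑ j ∈ Finset.range n, ((ω j : ℕ):ℝ)*(1-lam)*lam^j := by
          rw [Finset.mul_sum]; exact Finset.sum_congr rfl fun j _ => by ring
        show p.1 = lam ^ (n+1) * ((Emap lam)^[n] (Emap lam p)).1
          + (∑ j ∈ Finset.range n, ((ω j : ℕ):ℝ)*(1-lam)*lam^(j+1) + ((0:Fin 2):ℕ)*(1-lam)*lam^0)
        rw [key, hE1, h1]; simp only [Fin.val_zero, Fin.val_one, Nat.cast_zero, Nat.cast_one]; ring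
      · rw [Function.iterate_succ_apply, Finset.sum_range_succ']
        have key : ∑ j ∈ Finset.range n, ((ω j : ℕ):ℝ)*(1/2:ℝ)^(j+1+1)
            = (∑ j ∈ Finset.range n, ((ω j : ℕ):ℝ)*(1/2:ℝ)^(j+1)) / 2 := by
          rw [Finset.sum_div]; exact Finset.sum_congr rfl fun j _ => by ring
        show p.2 = ((Emap lam)^[n] (Emap lam p)).2 / 2 ^ (n+1)
          + (∑ j ∈ Finset.range n, ((ω j : ℕ):ℝ)*(1/2:ℝ)^(j+1+1) + ((0:Fin 2):ℕ)*(1/2:ℝ)^(0+1))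
        rw [key, hE2, h2]; simp only [Fin.val_zero, Fin.val_one, Nat.cast_zero, Nat.cast_one]; ring
    case neg =>
      have hE1 : p.1 = lam * (Emap lam p).1 + ((1 : ℕ) : ℝ) * (1 - lam) := by
        simp only [Emap, if_neg h]; field_simp; simp
      have hE2 : p.2 = ((Emap lam p).2 + ((1 : ℕ) : ℝ)) / 2 := by
        simp only [Emap, if_neg h]; ring
      refine ⟨fun j => Nat.rec 1 (fun k _ => ω k) j, ?_, ?_⟩
      · rw [Function.iterate_succ_apply, Finset.sum_range_succ']
        have key : ∑ j ∈ Finset.range n, ((ω j : ℕ):ℝ)*(1-lam)*lam^(j+1)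
            = lam * ∑ j ∈ Finset.range n, ((ω j : ℕ):ℝ)*(1-lam)*lam^j := by
          rw [Finset.mul_sum]; exact Finset.sum_congr rfl fun j _ => by ring
        show p.1 = lam ^ (n+1) * ((Emap lam)^[n] (Emap lam p)).1
          + (∑ j ∈ Finset.range n, ((ω j : ℕ):ℝ)*(1-lam)*lam^(j+1) + ((1:Fin 2):ℕ)*(1-lam)*lam^0)
        rw [key, hE1, h1]; simp only [Fin.val_zero, Fin.val_one, Nat.cast_zero, Nat.cast_one]; ring
      · rw [Function.iterate_succ_apply, Finset.sum_range_succ']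
        have key : ∑ j ∈ Finset.range n, ((ω j : ℕ):ℝ)*(1/2:ℝ)^(j+1+1)
            = (∑ j ∈ Finset.range n, ((ω j : ℕ):ℝ)*(1/2:ℝ)^(j+1)) / 2 := by
          rw [Finset.sum_div]; exact Finset.sum_congr rfl fun j _ => by ring
        show p.2 = ((Emap lam)^[n] (Emap lam p)).2 / 2 ^ (n+1)
          + (∑ j ∈ Finset.range n, ((ω j : ℕ):ℝ)*(1/2:ℝ)^(j+1+1) + ((1:Fin 2):ℕ)*(1/2:ℝ)^(0+1))
        rw [key, hE2, h2]; simp only [Fin.val_zero, Fin.val_one, Nat.cast_zero, Nat.cast_one]; ring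

lemma cover {lam γ : ℝ} (hlam : lam ∈ Set.Ioo (1 / 2 : ℝ) 1) (hγ : 0 < γ)
    (z : ℝ × ℝ) (n : ℕ) (x : ℝ × ℝ) (hx : (Emap lam)^[n] x ∈ cube z (γ ^ n)) :
    ∃ ω : Fin n → Fin 2, x ∈ Metric.closedBall (ctr lam z n ω) ((lam * γ) ^ n) := by
  have hl0 : (0:ℝ) < lam := lt_trans (by norm_num) hlam.1
  obtain ⟨ω, h1, h2⟩ := expand lam hl0.ne' n x
  refine ⟨fun j => ω j, ?_⟩
  set q := (Emap lam)^[n] x with hq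
  have hc1 : x.1 - (ctr lam z n fun j => ω j).1 = lam ^ n * (q.1 - z.1) := by
    rw [ctr, ← Finset.sum_range (fun j => ((ω j : ℕ) : ℝ) * (1 - lam) * lam ^ j), h1]; ring
  have hc2 : x.2 - (ctr lam z n fun j => ω j).2 = (q.2 - z.2) / 2 ^ n := by
    rw [ctr, ← Finset.sum_range (fun j => ((ω j : ℕ) : ℝ) * (1/2:ℝ) ^ (j+1)), h2]; ring
  rw [Metric.mem_closedBall, Prod.dist_eq, Real.dist_eq, Real.dist_eq, max_le_iff, hc1, hc2]
  constructor
  · rw [abs_mul, abs_of_pos (pow_pos hl0 n), mul_pow]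
    exact mul_le_mul_of_nonneg_left hx.1 (pow_nonneg hl0.le n)
  · rw [abs_div, abs_of_pos (pow_pos (by norm_num : (0:ℝ) < 2) n), div_le_iff₀ (pow_pos (by norm_num : (0:ℝ) < 2) n)]
    calc |q.2 - z.2| ≤ γ ^ n := hx.2
    _ ≤ (2 * lam * γ) ^ n := pow_le_pow_left₀ hγ.le (by nlinarith [hlam.1]) n
    _ = (lam * γ) ^ n * 2 ^ n := by rw [← mul_pow]; ring_nf

theorem statement8 (lam γ : ℝ) (hlam : lam ∈ Set.Ioo (1 / 2 : ℝ) 1)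
    (hγ : γ ∈ Set.Ioo (0 : ℝ) 1) (z : ℝ × ℝ) (hz : z ∈ Set.range (piPU lam)) :
    (∀ s : ℝ, 0 ≤ s → -Real.log 2 / Real.log (lam * γ) < s →
      μH[s] (Rstar lam γ z) = 0) ∧
    dimH (Rstar lam γ z) ≤ ENNReal.ofReal (-Real.log 2 / Real.log (lam * γ)) := by
  have hl0 : (0:ℝ) < lam := lt_trans (by norm_num) hlam.1
  have hc0 : (0:ℝ) < lam * γ := mul_pos hl0 hγ.1
  have hc1 : lam * γ < 1 := by nlinarith [hlam.2, hγ.2, hγ.1, hl0]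
  have hlogc : Real.log (lam * γ) < 0 := Real.log_neg hc0 hc1
  have hd0 : 0 < -Real.log 2 / Real.log (lam * γ) :=
    div_pos_iff.2 (Or.inr ⟨neg_lt_zero.2 (Real.log_pos one_lt_two), hlogc⟩)
  have part1 : ∀ s : ℝ, 0 ≤ s → -Real.log 2 / Real.log (lam * γ) < s →
      μH[s] (Rstar lam γ z) = 0 := by
    intro s hs0 hs
    have hs0' : 0 < s := lt_trans hd0 hs
    -- 2 * (lam*γ)^s < 1
    have hslog : s * Real.log (lam * γ) < -Real.log 2 := (div_lt_iff_of_neg hlogc).1 hs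
    have hcs : (lam * γ) ^ s < 1 / 2 := by
      have h1 : Real.log ((lam * γ) ^ s) < Real.log (1 / 2) := by
        rw [Real.log_rpow hc0, one_div, Real.log_inv]; exact hslog
      calc (lam * γ) ^ s = Real.exp (Real.log ((lam * γ) ^ s)) :=
            (Real.exp_log (Real.rpow_pos_of_pos hc0 s)).symm
      _ < Real.exp (Real.log (1 / 2)) := Real.exp_lt_exp.2 h1
      _ = 1 / 2 := Real.exp_log (by norm_num)
    have hcs0 : 0 ≤ (lam * γ) ^ s := Real.rpow_nonneg hc0.le s
    set u : ℝ≥0∞ := ENNReal.ofReal ((lam * γ) ^ s) with hu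
    have hq1 : 2 * u < 1 := by
      rw [hu, show (2:ℝ≥0∞) = ENNReal.ofReal 2 by simp, ← ENNReal.ofReal_mul (by norm_num)]
      exact ENNReal.ofReal_lt_one.2 (by linarith)
    set K : ℝ≥0∞ := ENNReal.ofReal ((2:ℝ) ^ s) with hK
    -- the covering family
    set t : ℕ → (Σ n : ℕ, (Fin n → Fin 2)) → Set (ℝ × ℝ) :=
      fun N p => if N ≤ p.1 then Metric.closedBall (ctr lam z p.1 p.2) ((lam * γ) ^ p.1) else ∅
      with ht_def
    have hmain := MeasureTheory.Measure.hausdorffMeasure_le_liminf_tsum (ι := fun _ : ℕ => Σ n : ℕ, (Fin n → Fin 2))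
      s (Rstar lam γ z) (l := atTop) (r := fun N => ENNReal.ofReal (2 * (lam * γ) ^ N))
      (by
        have h0 : Tendsto (fun N : ℕ => 2 * (lam * γ) ^ N) atTop (𝓝 0) := by
          simpa using (tendsto_pow_atTop_nhds_zero_of_lt_one hc0.le hc1).const_mul (2:ℝ)
        simpa using ENNReal.tendsto_ofReal h0)
      t
      (by
        refine Eventually.of_forall fun N => ?_
        rintro ⟨n, ω⟩
        simp only [ht_def]
        split_ifs with hn
        · exact (ediam_closedBall _ _).trans (ENNReal.ofReal_le_ofReal
            (mul_le_mul_of_nonneg_left (pow_le_pow_of_le_one hc0.le hc1.le hn) (by norm_num)))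
        · simp)
      (by
        refine Eventually.of_forall fun N => ?_
        intro x hx
        obtain ⟨n, hNn, hcube⟩ := frequently_atTop.1 hx.2 N
        obtain ⟨ω, hω⟩ := cover hlam hγ.1 z n x hcube
        exact Set.mem_iUnion.2 ⟨⟨n, ω⟩, by simp only [ht_def, if_pos hNn]; exact hω⟩)
    -- bound the sums
    have hbound : ∀ N : ℕ, (∑' i : Σ n : ℕ, (Fin n → Fin 2), EMetric.diam (t N i) ^ s)
        ≤ K * ((2 * u) ^ N * (1 - 2 * u)⁻¹) := by
      intro N
      have hterm : ∀ (n : ℕ) (ω : Fin n → Fin 2), EMetric.diam (t N ⟨n, ω⟩) ^ s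
          ≤ (if N ≤ n then K * u ^ n else 0) := by
        intro n ω
        simp only [ht_def]
        split_ifs with hn
        · calc EMetric.diam (Metric.closedBall (ctr lam z n ω) ((lam * γ) ^ n)) ^ s
              ≤ (ENNReal.ofReal (2 * (lam * γ) ^ n)) ^ s :=
                ENNReal.rpow_le_rpow (ediam_closedBall _ _) hs0
          _ = ENNReal.ofReal ((2 * (lam * γ) ^ n) ^ s) :=
                ENNReal.ofReal_rpow_of_nonneg (by positivity) hs0
          _ = ENNReal.ofReal ((2:ℝ) ^ s * (((lam * γ) ^ s) ^ n)) := by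
                congr 1
                rw [Real.mul_rpow (by norm_num) (pow_nonneg hc0.le n),
                  ← Real.rpow_natCast (lam * γ) n, ← Real.rpow_mul hc0.le,
                  mul_comm (n:ℝ) s, Real.rpow_mul hc0.le, Real.rpow_natCast]
          _ = K * u ^ n := by
                rw [ENNReal.ofReal_mul (by positivity), hK, hu, ENNReal.ofReal_pow hcs0]
        · simp [EMetric.diam_empty, Metric.ediam_empty, hs0', ENNReal.zero_rpow_of_pos hs0']; exact Or.inl Metric.ediam_empty
      calc (∑' i : Σ n : ℕ, (Fin n → Fin 2), EMetric.diam (t N i) ^ s)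
          ≤ ∑' i : Σ n : ℕ, (Fin n → Fin 2), (if N ≤ i.1 then K * u ^ i.1 else 0) :=
            ENNReal.tsum_le_tsum fun ⟨n, ω⟩ => hterm n ω
      _ = ∑' n : ℕ, ∑' ω : Fin n → Fin 2, (if N ≤ n then K * u ^ n else 0) :=
            ENNReal.tsum_sigma' _
      _ = ∑' n : ℕ, (2:ℝ≥0∞) ^ n * (if N ≤ n then K * u ^ n else 0) := by
            refine tsum_congr fun n => ?_
            rw [tsum_fintype, Finset.sum_const, Finset.card_univ, Fintype.card_fun,
              nsmul_eq_mul]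
            push_cast
            simp
      _ = ∑' n : ℕ, K * (if N ≤ n then (2 * u) ^ n else 0) := by
            refine tsum_congr fun n => ?_
            split_ifs with hn
            · rw [mul_pow]; ring
            · simp
      _ = K * ((2 * u) ^ N * (1 - 2 * u)⁻¹) := by
            rw [ENNReal.tsum_mul_left, geo_tail]
    -- conclude
    have hA : K * (1 - 2 * u)⁻¹ ≠ ⊤ := by
      refine ENNReal.mul_ne_top ENNReal.ofReal_ne_top (ENNReal.inv_ne_top.2 ?_)
      intro h
      exact (not_le.2 hq1) (tsub_eq_zero_iff_le.1 h)
    have hBtend : Tendsto (fun N : ℕ => K * ((2 * u) ^ N * (1 - 2 * u)⁻¹)) atTop (𝓝 0) := by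
      have h1 : Tendsto (fun N : ℕ => (2 * u) ^ N) atTop (𝓝 0) :=
        ENNReal.tendsto_pow_atTop_nhds_zero_of_lt_one hq1
      have h2 := ENNReal.Tendsto.const_mul h1 (Or.inr hA)
      simp only [mul_zero] at h2
      convert h2 using 2 with N
      ring
    refine le_antisymm ?_ (by simp)
    calc μH[s] (Rstar lam γ z) ≤ _ := hmain
    _ ≤ liminf (fun N : ℕ => K * ((2 * u) ^ N * (1 - 2 * u)⁻¹)) atTop :=
        liminf_le_liminf (Eventually.of_forall hbound)
    _ = 0 := hBtend.liminf_eq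
  refine ⟨part1, ?_⟩
  refine dimH_le fun d' hd' => ?_
  by_contra hlt
  push_neg at hlt
  have hlt' : -Real.log 2 / Real.log (lam * γ) < (d' : ℝ) := by
    rw [← ENNReal.ofReal_coe_nnreal] at hlt
    exact (ENNReal.ofReal_lt_ofReal_iff_of_nonneg hd0.le).1 hlt
  have h0 := part1 (d' : ℝ) d'.coe_nonneg hlt'
  simp [h0] at hd'
end

section
/- Fix γ ∈ (0,1), λ ∈ (1/2, 1), z ∈ F. Then dim_H R*(z, λ, γ) ≤ (2 log 2 + log λ)/ log(2/γ). -/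
open MeasureTheory Filter Set Real

section Series

variable {lam : ℝ}

lemma digit_le_one (j : Fin 2) : ((j : ℕ) : ℝ) ≤ 1 := by
  fin_cases j <;> norm_num

lemma digit_nonneg (j : Fin 2) : (0:ℝ) ≤ ((j : ℕ) : ℝ) := by positivity

lemma summable1 (hl0 : 0 < lam) (hl1 : lam < 1) (i : ℕ → Fin 2) : Summable (fun n => ((i n : ℕ) : ℝ) * (1 - lam) * lam ^ n) := by
  apply Summable.of_nonneg_of_le (fun n =>
      mul_nonneg (mul_nonneg (digit_nonneg (i n)) (by linarith)) (pow_nonneg hl0.le n))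
    (fun n => ?_) ((summable_geometric_of_lt_one hl0.le hl1).mul_left (1 - lam))
  have h1 := digit_le_one (i n)
  have h3 : (0:ℝ) ≤ (1 - lam) * lam ^ n :=
    mul_nonneg (by linarith) (pow_nonneg hl0.le n)
  calc ((i n : ℕ) : ℝ) * (1 - lam) * lam ^ n = ((i n : ℕ) : ℝ) * ((1 - lam) * lam ^ n) := by ring
    _ ≤ 1 * ((1 - lam) * lam ^ n) := mul_le_mul_of_nonneg_right h1 h3
    _ = (1 - lam) * lam ^ n := by ring

lemma summable2 (i : ℕ → Fin 2) : Summable (fun n => ((i n : ℕ) : ℝ) * (1 / 2 : ℝ) ^ (n + 1)) := by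
  apply Summable.of_nonneg_of_le (fun n => by
      have := digit_nonneg (i n); positivity)
    (fun n => ?_) (((summable_geometric_of_lt_one (by norm_num) (by norm_num : (1/2:ℝ) < 1)).mul_left (1/2)))
  have h1 := digit_le_one (i n)
  have h2 := digit_nonneg (i n)
  have h3 : (0:ℝ) ≤ (1/2:ℝ) ^ n := by positivity
  calc ((i n : ℕ) : ℝ) * (1 / 2 : ℝ) ^ (n + 1) ≤ 1 * (1/2:ℝ)^(n+1) := by
        apply mul_le_mul_of_nonneg_right h1 (by positivity)
    _ = 1/2 * (1/2)^n := by ring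
  
/-- vertical coordinate of piPU -/
noncomputable def piV (i : ℕ → Fin 2) : ℝ := ∑' n : ℕ, ((i n : ℕ) : ℝ) * (1 / 2 : ℝ) ^ (n + 1)

lemma piV_nonneg (i : ℕ → Fin 2) : 0 ≤ piV i :=
  tsum_nonneg (fun n => by have := digit_nonneg (i n); positivity)

lemma piV_le_one (i : ℕ → Fin 2) : piV i ≤ 1 := by
  have h : ∑' n : ℕ, (1/2:ℝ) * (1/2)^n = 1 := by
    rw [tsum_mul_left, tsum_geometric_of_lt_one (by norm_num) (by norm_num)]; norm_num
  calc piV i ≤ ∑' n : ℕ, (1/2:ℝ) * (1/2)^n := by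
        apply Summable.tsum_le_tsum (fun n => ?_) (summable2 i)
          ((summable_geometric_of_lt_one (by norm_num) (by norm_num : (1/2:ℝ) < 1)).mul_left (1/2))
        have h1 := digit_le_one (i n)
        calc ((i n : ℕ) : ℝ) * (1 / 2 : ℝ) ^ (n + 1) ≤ 1 * (1/2:ℝ)^(n+1) :=
              mul_le_mul_of_nonneg_right h1 (by positivity)
          _ = 1/2 * (1/2)^n := by ring
    _ = 1 := h

/-- the branch maps -/
noncomputable def fb (lam : ℝ) (j : Fin 2) (p : ℝ × ℝ) : ℝ × ℝ :=
  (lam * p.1 + (j:ℕ) * (1 - lam), p.2 / 2 + (j:ℕ) * (1/2))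

lemma piI_step (hl0 : 0 < lam) (hl1 : lam < 1) (i : ℕ → Fin 2) : piI lam i = ((i 0 : ℕ):ℝ) * (1 - lam) + lam * piI lam (fun n => i (n+1)) := by
  unfold piI
  rw [Summable.tsum_eq_zero_add (summable1 hl0 hl1 i)]
  congr 1
  · simp
  · rw [← tsum_mul_left]
    congr 1; funext n; ring

lemma piV_step (i : ℕ → Fin 2) : piV i = ((i 0 : ℕ):ℝ) * (1/2) + (1/2) * piV (fun n => i (n+1)) := by
  unfold piV
  rw [Summable.tsum_eq_zero_add (summable2 i)]
  congr 1
  · norm_num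
  · rw [← tsum_mul_left]
    congr 1; funext n; ring

lemma piPU_step (hl0 : 0 < lam) (hl1 : lam < 1) (i : ℕ → Fin 2) : piPU lam i = fb lam (i 0) (piPU lam (fun n => i (n+1))) := by
  unfold piPU fb
  ext
  · exact (piI_step hl0 hl1 i).trans (by ring)
  · simp only []
    show piV i = piV (fun n => i (n+1)) / 2 + ((i 0 : ℕ):ℝ) * (1/2)
    rw [piV_step i]; ring

end Series

section Dyn

variable {lam : ℝ}

/-- Bad sequences: eventually zero with a final 1 (these are the coding boundary points). -/
def BadSeq (i : ℕ → Fin 2) : Prop := ∃ n, i n = 1 ∧ ∀ m, n < m → i m = 0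

lemma badseq_shift {i : ℕ → Fin 2} (h : ¬ BadSeq i) : ¬ BadSeq (fun n => i (n+1)) := by
  rintro ⟨n, h1, h2⟩
  exact h ⟨n+1, h1, fun m hm => by
    obtain ⟨m', rfl⟩ : ∃ m', m = m' + 1 := ⟨m - 1, by omega⟩
    exact h2 m' (by omega)⟩

lemma Emap_step (hl0 : 0 < lam) (hl1 : lam < 1) {i : ℕ → Fin 2} (hi : ¬ BadSeq i) :
    Emap lam (piPU lam i) = piPU lam (fun n => i (n+1)) := by
  have hstep := piPU_step hl0 hl1 i
  set q := piPU lam (fun n => i (n+1)) with hq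
  have hq2 : q.2 = piV (fun n => i (n+1)) := rfl
  have hy0 : 0 ≤ q.2 := by rw [hq2]; exact piV_nonneg _
  have hy1 : q.2 ≤ 1 := by rw [hq2]; exact piV_le_one _
  rcases Fin.exists_fin_two.mp ⟨i 0, rfl⟩ with h0 | h0
  all_goals rw [hstep]
  · -- i 0 = 0
    have : fb lam (i 0) q = (lam * q.1, q.2 / 2) := by rw [h0]; unfold fb; norm_num
    rw [this]; unfold Emap
    rw [if_pos (by simpa using by linarith : (lam * q.1, q.2 / 2).2 ≤ 1/2)]
    refine Prod.ext ?_ ?_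
    · show lam * q.1 / lam = q.1
      field_simp
    · show 2 * (q.2 / 2) = q.2
      ring
  · -- i 0 = 1
    have : fb lam (i 0) q = (lam * q.1 + (1 - lam), q.2 / 2 + 1/2) := by
      rw [h0]; unfold fb; norm_num
    rw [this]; unfold Emap
    have hpos : 0 < q.2 := by
      -- since i is not bad and i 0 = 1, some later digit is 1
      have : ∃ m, 0 < m ∧ i m ≠ 0 := by
        by_contra hc
        push_neg at hc
        exact hi ⟨0, h0, hc⟩
      obtain ⟨m, hm, hm1⟩ := this
      have hm2 : i m = 1 := by omega
      obtain ⟨m', rfl⟩ : ∃ m', m = m' + 1 := ⟨m - 1, by omega⟩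
      rw [hq2]
      have hterm : (0:ℝ) < ((i (m'+1) : ℕ):ℝ) * (1/2:ℝ)^(m'+1) := by
        rw [hm2]; norm_num
      calc (0:ℝ) < ((i (m'+1) : ℕ):ℝ) * (1/2:ℝ)^(m'+1) := hterm
        _ ≤ piV (fun n => i (n+1)) := by
          apply Summable.le_tsum (summable2 (fun n => i (n+1))) m'
          intro b _
          exact mul_nonneg (digit_nonneg _) (by positivity)
    rw [if_neg (by simpa using by linarith : ¬ ((lam * q.1 + (1 - lam), q.2 / 2 + 1/2).2 ≤ 1/2))]
    refine Prod.ext ?_ ?_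
    · show (lam * q.1 + (1 - lam) - (1 - lam)) / lam = q.1
      field_simp
      ring
    · show 2 * (q.2 / 2 + 1/2) - 1 = q.2
      ring

lemma Emap_iter (hl0 : 0 < lam) (hl1 : lam < 1) :
    ∀ (n : ℕ) (i : ℕ → Fin 2), ¬ BadSeq i →
      (Emap lam)^[n] (piPU lam i) = piPU lam (fun m => i (m + n)) := by
  intro n
  induction n with
  | zero => intro i _; simp
  | succ n ih =>
    intro i hi
    rw [Function.iterate_succ_apply, Emap_step hl0 hl1 hi, ih _ (badseq_shift hi)]
    exact congrArg (piPU lam) (funext fun m => congrArg i (by omega))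

/-- Composition of the first `n` branch maps selected by `i`. -/
noncomputable def Fc (lam : ℝ) : (ℕ → Fin 2) → ℕ → ℝ × ℝ → ℝ × ℝ
  | _, 0, p => p
  | i, (n+1), p => fb lam (i 0) (Fc lam (fun m => i (m+1)) n p)

lemma piPU_Fc (hl0 : 0 < lam) (hl1 : lam < 1) :
    ∀ (n : ℕ) (i : ℕ → Fin 2), piPU lam i = Fc lam i n (piPU lam (fun m => i (m + n))) := by
  intro n
  induction n with
  | zero => intro i; simp [Fc]
  | succ n ih =>
    intro i
    rw [piPU_step hl0 hl1 i]
    show _ = fb lam (i 0) (Fc lam (fun m => i (m+1)) n _)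
    have hfun : (fun m => i (m + (n+1))) = (fun m => (fun k => i (k+1)) (m + n)) := by
      funext m; exact congrArg i (by omega)
    rw [hfun, ← ih (fun m => i (m+1))]

lemma Fc_congr : ∀ (n : ℕ) (i j : ℕ → Fin 2) (p : ℝ × ℝ),
    (∀ m, m < n → i m = j m) → Fc lam i n p = Fc lam j n p := by
  intro n
  induction n with
  | zero => intro i j p _; rfl
  | succ n ih =>
    intro i j p h
    show fb lam (i 0) _ = fb lam (j 0) _
    rw [h 0 (by omega), ih (fun m => i (m+1)) (fun m => j (m+1)) p (fun m hm => h (m+1) (by omega))]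

lemma Fc_contract (hl0 : 0 ≤ lam) : ∀ (n : ℕ) (i : ℕ → Fin 2) (p q : ℝ × ℝ),
    |(Fc lam i n p).1 - (Fc lam i n q).1| = lam ^ n * |p.1 - q.1| ∧
    |(Fc lam i n p).2 - (Fc lam i n q).2| = (1/2:ℝ) ^ n * |p.2 - q.2| := by
  intro n
  induction n with
  | zero => intro i p q; simp [Fc]
  | succ n ih =>
    intro i p q
    obtain ⟨h1, h2⟩ := ih (fun m => i (m+1)) p q
    constructor
    · show |(lam * _ + _) - (lam * _ + _)| = _
      rw [show (lam * (Fc lam (fun m => i (m+1)) n p).1 + ((i 0:ℕ):ℝ) * (1 - lam)) -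
          (lam * (Fc lam (fun m => i (m+1)) n q).1 + ((i 0:ℕ):ℝ) * (1 - lam)) =
          lam * ((Fc lam (fun m => i (m+1)) n p).1 - (Fc lam (fun m => i (m+1)) n q).1) by ring,
        abs_mul, abs_of_nonneg hl0, h1]
      ring
    · show |(_ / 2 + _) - (_ / 2 + _)| = _
      rw [show ((Fc lam (fun m => i (m+1)) n p).2 / 2 + ((i 0:ℕ):ℝ) * (1/2)) -
          ((Fc lam (fun m => i (m+1)) n q).2 / 2 + ((i 0:ℕ):ℝ) * (1/2)) =
          (1/2) * ((Fc lam (fun m => i (m+1)) n p).2 - (Fc lam (fun m => i (m+1)) n q).2) by ring,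
        abs_mul, abs_of_nonneg (by norm_num : (0:ℝ) ≤ 1/2), h2]
      ring

end Dyn

section Geom

variable (lam γ : ℝ) (z : ℝ × ℝ)

/-- extend a finite word to a sequence by zeros -/
def extw {n : ℕ} (w : Fin n → Fin 2) : ℕ → Fin 2 :=
  fun m => if h : m < n then w ⟨m, h⟩ else 0

/-- centre of the n-th level rectangle with word w -/
noncomputable def cw (n : ℕ) (w : Fin n → Fin 2) : ℝ × ℝ := Fc lam (extw w) n z

/-- the n-th level rectangle with word w -/
def rect (n : ℕ) (w : Fin n → Fin 2) : Set (ℝ × ℝ) :=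
  {p | |p.1 - (cw lam z n w).1| ≤ (lam * γ) ^ n ∧ |p.2 - (cw lam z n w).2| ≤ (γ/2) ^ n}

/-- union of rectangles at level n -/
def Cset (n : ℕ) : Set (ℝ × ℝ) := ⋃ w : Fin n → Fin 2, rect lam γ z n w

/-- the k-th square covering rectangle (n,w), of side 2(γ/2)^n -/
def sqr (n : ℕ) (w : Fin n → Fin 2) (k : ℕ) : Set (ℝ × ℝ) :=
  Icc ((cw lam z n w).1 - (lam * γ) ^ n + k * (2 * (γ/2)^n))
      ((cw lam z n w).1 - (lam * γ) ^ n + (k+1) * (2 * (γ/2)^n)) ×ˢ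
  Icc ((cw lam z n w).2 - (γ/2)^n) ((cw lam z n w).2 + (γ/2)^n)

lemma cover1d {a b x c : ℝ} (hb : 0 < b) (h : |x - c| ≤ a) :
    ∃ k : ℕ, (k:ℝ) ≤ 2*a/b ∧ c - a + k*b ≤ x ∧ x ≤ c - a + (k+1)*b := by
  obtain ⟨hl, hr⟩ := abs_le.mp h
  set t := x - (c - a) with ht
  have ht0 : 0 ≤ t := by rw [ht]; linarith
  have ht2 : t ≤ 2*a := by rw [ht]; linarith
  refine ⟨⌊t/b⌋₊, ?_, ?_, ?_⟩
  · calc (⌊t/b⌋₊:ℝ) ≤ t/b := Nat.floor_le (by positivity)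
      _ ≤ 2*a/b := by gcongr
  · have h3 : (⌊t/b⌋₊:ℝ) * b ≤ t := by
      calc (⌊t/b⌋₊:ℝ)*b ≤ t/b*b := mul_le_mul_of_nonneg_right (Nat.floor_le (by positivity)) hb.le
        _ = t := div_mul_cancel₀ t hb.ne'
    rw [ht] at h3; linarith
  · have h3 : t < ((⌊t/b⌋₊:ℝ)+1)*b := by
      calc t = t/b*b := (div_mul_cancel₀ t hb.ne').symm
        _ < ((⌊t/b⌋₊:ℝ)+1)*b := mul_lt_mul_of_pos_right (Nat.lt_floor_add_one _) hb
    rw [ht] at h3; push_cast; linarith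

lemma rect_subset_sq (hl0 : 0 < lam) (hg0 : 0 < γ) {n : ℕ} {w : Fin n → Fin 2} {p : ℝ × ℝ}
    (hp : p ∈ rect lam γ z n w) :
    ∃ k ≤ ⌊(2*lam)^n⌋₊, p ∈ sqr lam γ z n w k := by
  obtain ⟨h1, h2⟩ := hp
  have hbpos : (0:ℝ) < 2*(γ/2)^n := by positivity
  obtain ⟨k, hk1, hk2, hk3⟩ := cover1d hbpos h1
  refine ⟨k, ?_, ⟨hk2, hk3⟩, ?_⟩
  · apply Nat.le_floor
    calc (k:ℝ) ≤ 2*(lam*γ)^n/(2*(γ/2)^n) := hk1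
      _ = (2*lam)^n := by
        rw [mul_pow, div_pow, mul_pow]
        field_simp
  · have h4 := abs_le.mp h2
    exact ⟨by linarith [h4.1], by linarith [h4.2]⟩

lemma sqr_diam (hg0 : 0 < γ) (n : ℕ) (w : Fin n → Fin 2) (k : ℕ) :
    EMetric.diam (sqr lam γ z n w k) ≤ ENNReal.ofReal (2 * (γ/2)^n) := by
  apply EMetric.diam_le
  rintro p ⟨hp1, hp2⟩ q ⟨hq1, hq2⟩
  rw [Prod.edist_eq, max_le_iff]
  constructor
  · rw [edist_dist, Real.dist_eq]
    apply ENNReal.ofReal_le_ofReal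
    rw [abs_le]
    obtain ⟨a1, a2⟩ := hp1; obtain ⟨b1, b2⟩ := hq1
    constructor <;> push_cast at * <;> nlinarith
  · rw [edist_dist, Real.dist_eq]
    apply ENNReal.ofReal_le_ofReal
    rw [abs_le]
    obtain ⟨a1, a2⟩ := hp2; obtain ⟨b1, b2⟩ := hq2
    constructor <;> nlinarith

lemma Rstar_subset (hl0 : 0 < lam) (hl1 : lam < 1) (hg0 : 0 < γ) :
    Rstar lam γ z ⊆ (piPU lam '' {i | BadSeq i}) ∪ ⋂ N, ⋃ n, ⋃ (_ : N ≤ n), Cset lam γ z n := by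
  rintro x ⟨⟨i, rfl⟩, hfreq⟩
  by_cases hbad : BadSeq i
  · exact Or.inl ⟨i, hbad, rfl⟩
  right
  rw [mem_iInter]
  intro N
  obtain ⟨n, hn, hcube⟩ := (frequently_atTop.mp hfreq) N
  rw [mem_iUnion]; refine ⟨n, ?_⟩
  rw [mem_iUnion]; refine ⟨hn, ?_⟩
  rw [Emap_iter hl0 hl1 n i hbad] at hcube
  obtain ⟨hc1, hc2⟩ := hcube
  refine mem_iUnion.mpr ⟨fun m : Fin n => i m, ?_, ?_⟩
  · -- horizontal estimate
    have hx : piPU lam i = Fc lam i n (piPU lam (fun m => i (m + n))) := piPU_Fc hl0 hl1 n i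
    have hcw : cw lam z n (fun m : Fin n => i m) = Fc lam i n z := by
      unfold cw
      exact Fc_congr n _ i z (fun m hm => by simp [extw, hm])
    obtain ⟨hcon1, _⟩ := Fc_contract hl0.le n i (piPU lam (fun m => i (m + n))) z
    rw [hx, hcw]
    calc |(Fc lam i n (piPU lam fun m => i (m + n))).1 - (Fc lam i n z).1|
        = lam ^ n * |(piPU lam fun m => i (m + n)).1 - z.1| := hcon1
      _ ≤ lam ^ n * γ ^ n := by
          apply mul_le_mul_of_nonneg_left hc1 (by positivity)
      _ = (lam * γ) ^ n := (mul_pow _ _ _).symm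
  · have hx : piPU lam i = Fc lam i n (piPU lam (fun m => i (m + n))) := piPU_Fc hl0 hl1 n i
    have hcw : cw lam z n (fun m : Fin n => i m) = Fc lam i n z := by
      unfold cw
      exact Fc_congr n _ i z (fun m hm => by simp [extw, hm])
    obtain ⟨_, hcon2⟩ := Fc_contract hl0.le n i (piPU lam (fun m => i (m + n))) z
    rw [hx, hcw]
    calc |(Fc lam i n (piPU lam fun m => i (m + n))).2 - (Fc lam i n z).2|
        = (1/2:ℝ) ^ n * |(piPU lam fun m => i (m + n)).2 - z.2| := hcon2
      _ ≤ (1/2:ℝ) ^ n * γ ^ n := by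
          apply mul_le_mul_of_nonneg_left hc2 (by positivity)
      _ = (γ/2) ^ n := by rw [← mul_pow]; ring_nf

end Geom

section Meas
open scoped ENNReal

lemma badseq_countable : {i : ℕ → Fin 2 | BadSeq i}.Countable := by
  have h : {i : ℕ → Fin 2 | BadSeq i} ⊆ ⋃ N : ℕ, {i | ∀ m, N ≤ m → i m = 0} := by
    rintro i ⟨n, _, h2⟩
    exact mem_iUnion.mpr ⟨n+1, fun m hm => h2 m (by omega)⟩
  apply Set.Countable.mono h
  apply Set.countable_iUnion
  intro N
  apply Set.Finite.countable
  apply Set.Finite.of_finite_image (f := fun i => (fun m : Fin N => i m))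
  · exact Set.toFinite _
  · intro i hi j hj hij
    funext m
    by_cases hm : m < N
    · exact congrFun hij ⟨m, hm⟩
    · rw [hi m (by omega), hj m (by omega)]

variable {lam γ : ℝ}

lemma measure_T_zero (hl : lam ∈ Set.Ioo (1/2:ℝ) 1) (hγ : γ ∈ Set.Ioo (0:ℝ) 1) (z : ℝ × ℝ)
    {d : ℝ} (hd0 : 0 < d) (hd : Real.log (4*lam) < d * Real.log (2/γ)) :
    μH[d] (⋂ N, ⋃ n, ⋃ (_ : N ≤ n), Cset lam γ z n) = 0 := by
  obtain ⟨hl2, hl1⟩ := hl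
  obtain ⟨hg0, hg1⟩ := hγ
  have hl0 : 0 < lam := by linarith
  have hg2 : (0:ℝ) < γ/2 := by linarith
  have hg2' : γ/2 < 1 := by linarith
  -- the ratio
  set ρr : ℝ := 4*lam*(γ/2)^d with hρr
  have hρr0 : 0 < ρr := by
    have : (0:ℝ) < (γ/2)^d := Real.rpow_pos_of_pos hg2 d
    positivity
  have hρr1 : ρr < 1 := by
    rw [hρr, Real.rpow_def_of_pos hg2]
    rw [show (4*lam : ℝ) = Real.exp (Real.log (4*lam)) from
      (Real.exp_log (by linarith)).symm, ← Real.exp_add]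
    rw [← Real.exp_zero]
    apply Real.exp_lt_exp.mpr
    have hlog : Real.log (γ/2) = - Real.log (2/γ) := by
      rw [Real.log_div (by linarith) (by norm_num), Real.log_div (by norm_num) (by linarith)]
      ring
    rw [hlog]; nlinarith
  set ρ : ℝ≥0∞ := ENNReal.ofReal ρr with hρ
  have hρ1 : ρ < 1 := by
    rw [hρ]
    exact ENNReal.ofReal_lt_one.mpr hρr1
  set C : ℝ≥0∞ := ENNReal.ofReal (2 * (2:ℝ)^d) with hC
  -- cover data
  set T := ⋂ N, ⋃ n, ⋃ (_ : N ≤ n), Cset lam γ z n with hT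
  have key : μH[d] T ≤ liminf
      (fun M : ℕ => ∑' i : Σ j : ℕ, (Fin (M+j) → Fin 2) × ℕ,
        EMetric.diam ((fun i : Σ j : ℕ, (Fin (M+j) → Fin 2) × ℕ =>
          if i.2.2 ≤ ⌊(2*lam)^(M+i.1)⌋₊ then sqr lam γ z (M+i.1) i.2.1 i.2.2 else ∅) i) ^ d)
      atTop := by
    apply MeasureTheory.Measure.hausdorffMeasure_le_liminf_tsum d T
      (fun M => ENNReal.ofReal (2*(γ/2)^M)) ?_ _ ?_ ?_
    · -- tendsto 0
      have h1 : Filter.Tendsto (fun M : ℕ => 2*(γ/2)^M) atTop (nhds 0) := by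
        have := tendsto_pow_atTop_nhds_zero_of_lt_one hg2.le hg2'
        simpa using this.const_mul 2
      have := ENNReal.tendsto_ofReal (a := 0) h1
      simpa using this
    · -- diam bound
      apply Filter.Eventually.of_forall
      rintro M ⟨j, w, k⟩
      by_cases hk : k ≤ ⌊(2*lam)^(M+j)⌋₊
      · simp only [hk, if_true]
        refine (sqr_diam lam γ z hg0 (M+j) w k).trans (ENNReal.ofReal_le_ofReal ?_)
        have : (γ/2)^(M+j) ≤ (γ/2)^M :=
          pow_le_pow_of_le_one hg2.le hg2'.le (by omega)
        linarith
      · simp [hk]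
    · -- covering
      apply Filter.Eventually.of_forall
      intro M
      intro x hx
      rw [hT, mem_iInter] at hx
      obtain ⟨n, hn⟩ := mem_iUnion.mp (hx M)
      obtain ⟨hMn, hCn⟩ := mem_iUnion.mp hn
      obtain ⟨w, hw⟩ := mem_iUnion.mp hCn
      obtain ⟨k, hk, hmem⟩ := rect_subset_sq lam γ z hl0 hg0 hw
      rw [mem_iUnion]
      obtain ⟨j, rfl⟩ : ∃ j, n = M + j := ⟨n - M, by omega⟩
      exact ⟨⟨j, w, k⟩, by simp only [hk, if_true]; exact hmem⟩
  -- now bound the sums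
  have sumbound : ∀ M : ℕ,
      (∑' i : Σ j : ℕ, (Fin (M+j) → Fin 2) × ℕ,
        EMetric.diam ((fun i : Σ j : ℕ, (Fin (M+j) → Fin 2) × ℕ =>
          if i.2.2 ≤ ⌊(2*lam)^(M+i.1)⌋₊ then sqr lam γ z (M+i.1) i.2.1 i.2.2 else ∅) i) ^ d)
      ≤ C * (1 - ρ)⁻¹ * ρ^M := by
    intro M
    rw [ENNReal.tsum_sigma']
    have step1 : ∀ j : ℕ,
        (∑' wk : (Fin (M+j) → Fin 2) × ℕ,
          EMetric.diam (if wk.2 ≤ ⌊(2*lam)^(M+j)⌋₊ then sqr lam γ z (M+j) wk.1 wk.2 else ∅) ^ d)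
        ≤ C * ρ^(M+j) := by
      intro j
      set N := M + j
      set K := ⌊(2*lam)^N⌋₊ with hK
      set A : ℝ≥0∞ := ENNReal.ofReal (2*(γ/2)^N) with hA
      have hterm : ∀ wk : (Fin N → Fin 2) × ℕ,
          EMetric.diam (if wk.2 ≤ K then sqr lam γ z N wk.1 wk.2 else ∅) ^ d
          ≤ if wk.2 ≤ K then A ^ d else 0 := by
        rintro ⟨w, k⟩
        by_cases hk : k ≤ K
        · simp only [hk, if_true]
          exact ENNReal.rpow_le_rpow (sqr_diam lam γ z hg0 N w k) hd0.le
        · simp only [hk, if_false]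
          rw [show EMetric.diam (∅ : Set (ℝ × ℝ)) = 0 from EMetric.diam_empty, ENNReal.zero_rpow_of_pos hd0]
      calc (∑' wk : (Fin N → Fin 2) × ℕ,
              EMetric.diam (if wk.2 ≤ K then sqr lam γ z N wk.1 wk.2 else ∅) ^ d)
          ≤ ∑' wk : (Fin N → Fin 2) × ℕ, (if wk.2 ≤ K then A ^ d else 0) :=
            ENNReal.tsum_le_tsum hterm
        _ = ∑' (w : Fin N → Fin 2), ∑' (k : ℕ), (if k ≤ K then A ^ d else 0) := by
            rw [ENNReal.tsum_prod']
        _ = ∑' (_ : Fin N → Fin 2), (K+1 : ℕ) * A ^ d := by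
            congr 1; funext w
            rw [tsum_eq_sum (s := Finset.range (K+1))
              (fun k hk => by rw [Finset.mem_range] at hk; simp [if_neg (by omega : ¬ k ≤ K)])]
            rw [Finset.sum_ite_of_true (fun b hb => by rw [Finset.mem_range] at hb; omega),
              Finset.sum_const, Finset.card_range, nsmul_eq_mul]
        _ = (2^N : ℕ) * ((K+1 : ℕ) * A ^ d) := by
            rw [tsum_fintype, Finset.sum_const, Finset.card_univ, nsmul_eq_mul]
            congr 2
            simp [Fintype.card_fun]
        _ ≤ C * ρ^N := by
            have hA' : A ^ d = ENNReal.ofReal ((2*(γ/2)^N)^d) := by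
              rw [hA, ENNReal.ofReal_rpow_of_pos (by positivity)]
            have hKle : ((K+1 : ℕ) : ℝ≥0∞) ≤ ENNReal.ofReal (2*(2*lam)^N) := by
              rw [← ENNReal.ofReal_natCast]
              apply ENNReal.ofReal_le_ofReal
              push_cast
              have h1 : (K:ℝ) ≤ (2*lam)^N := by
                rw [hK]; exact Nat.floor_le (by positivity)
              have h2 : (1:ℝ) ≤ (2*lam)^N := one_le_pow₀ (by linarith)
              linarith
            have h2N : ((2^N : ℕ) : ℝ≥0∞) = ENNReal.ofReal ((2:ℝ)^N) := by
              rw [← ENNReal.ofReal_natCast]; norm_num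
            have hreal : (2:ℝ)^N * (2*(2*lam)^N * ((2*(γ/2)^N)^d)) = (2*2^d) * ρr^N := by
              rw [Real.mul_rpow (by norm_num) (by positivity)]
              rw [show ((γ/2)^N : ℝ)^d = ((γ/2)^d)^N by
                rw [← Real.rpow_natCast (γ/2) N, ← Real.rpow_mul hg2.le, mul_comm (N:ℝ) d,
                  Real.rpow_mul hg2.le, Real.rpow_natCast]]
              rw [hρr, show (4:ℝ)*lam*(γ/2)^d = (2*(2*lam))*(γ/2)^d by ring,
                mul_pow, mul_pow, mul_pow]
              ring
            calc ((2^N : ℕ) : ℝ≥0∞) * ((K+1:ℕ) * A^d)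
                ≤ ENNReal.ofReal ((2:ℝ)^N) *
                    (ENNReal.ofReal (2*(2*lam)^N) * ENNReal.ofReal ((2*(γ/2)^N)^d)) := by
                  rw [h2N, hA']
                  exact mul_le_mul_right (mul_le_mul_left hKle _) _
              _ = ENNReal.ofReal ((2:ℝ)^N * (2*(2*lam)^N * ((2*(γ/2)^N)^d))) := by
                  rw [← ENNReal.ofReal_mul (by positivity), ← ENNReal.ofReal_mul (by positivity)]
              _ = C * ρ^N := by
                  rw [hreal, hC, hρ, ← ENNReal.ofReal_pow hρr0.le,
                    ← ENNReal.ofReal_mul (by positivity)]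
    calc (∑' j : ℕ, ∑' wk : (Fin (M+j) → Fin 2) × ℕ,
            EMetric.diam (if wk.2 ≤ ⌊(2*lam)^(M+j)⌋₊ then sqr lam γ z (M+j) wk.1 wk.2 else ∅) ^ d)
        ≤ ∑' j : ℕ, C * ρ^(M+j) := ENNReal.tsum_le_tsum step1
      _ = C * ρ^M * ∑' j : ℕ, ρ^j := by
          rw [← ENNReal.tsum_mul_left]
          congr 1; funext j
          rw [pow_add]; ring
      _ = C * ρ^M * (1-ρ)⁻¹ := by rw [ENNReal.tsum_geometric]
      _ = C * (1-ρ)⁻¹ * ρ^M := by ring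
  -- conclude
  have hlim : Filter.Tendsto (fun M : ℕ => C * (1 - ρ)⁻¹ * ρ^M) atTop (nhds 0) := by
    have h1 : Filter.Tendsto (fun M : ℕ => ρ^M) atTop (nhds 0) :=
      ENNReal.tendsto_pow_atTop_nhds_zero_of_lt_one hρ1
    have hC1 : C * (1 - ρ)⁻¹ ≠ ⊤ := by
      apply ENNReal.mul_ne_top ENNReal.ofReal_ne_top
      simp only [ne_eq, ENNReal.inv_eq_top]
      intro h
      rw [tsub_eq_zero_iff_le] at h
      exact absurd h (not_le.mpr hρ1)
    simpa using ENNReal.Tendsto.const_mul h1 (Or.inr hC1)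
  refine le_antisymm ?_ zero_le
  calc μH[d] T ≤ _ := key
    _ ≤ liminf (fun M : ℕ => C * (1 - ρ)⁻¹ * ρ^M) atTop := by
        apply liminf_le_liminf (Filter.Eventually.of_forall sumbound)
    _ = 0 := hlim.liminf_eq

end Meas

theorem statement9 (lam γ : ℝ) (hlam : lam ∈ Set.Ioo (1 / 2 : ℝ) 1)
    (hγ : γ ∈ Set.Ioo (0 : ℝ) 1) (z : ℝ × ℝ) (hz : z ∈ Set.range (piPU lam)) :
    dimH (Rstar lam γ z) ≤
      ENNReal.ofReal ((2 * Real.log 2 + Real.log lam) / Real.log (2 / γ)) := by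
  obtain ⟨hl2, hl1⟩ := hlam
  obtain ⟨hg0, hg1⟩ := hγ
  have hl0 : 0 < lam := by linarith
  have hlogden : 0 < Real.log (2/γ) := Real.log_pos (by rw [lt_div_iff₀ hg0]; linarith)
  have hlognum : 0 < 2 * Real.log 2 + Real.log lam := by
    have h1 : Real.log (1/2) < Real.log lam := Real.log_lt_log (by norm_num) hl2
    have h2 : Real.log (1/2:ℝ) = - Real.log 2 := by
      rw [Real.log_div (by norm_num) (by norm_num)]; simp
    have h3 : 0 < Real.log 2 := Real.log_pos (by norm_num)
    rw [h2] at h1; linarith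
  set s0 : ℝ := (2 * Real.log 2 + Real.log lam) / Real.log (2/γ) with hs0
  have hs0pos : 0 < s0 := div_pos hlognum hlogden
  have hsub := Rstar_subset lam γ z hl0 hl1 hg0
  set T := ⋂ N, ⋃ n, ⋃ (_ : N ≤ n), Cset lam γ z n with hT
  calc dimH (Rstar lam γ z) ≤ dimH ((piPU lam '' {i | BadSeq i}) ∪ T) := dimH_mono hsub
    _ = max (dimH (piPU lam '' {i | BadSeq i})) (dimH T) := dimH_union _ _
    _ ≤ ENNReal.ofReal s0 := by
        apply max_le
        · rw [Set.Countable.dimH_zero (badseq_countable.image _)]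
          exact zero_le
        · apply dimH_le
          intro d' hd'
          by_contra hc
          push_neg at hc
          have hcR : s0 < (d' : ℝ) := by
            rw [← ENNReal.ofReal_coe_nnreal] at hc
            exact (ENNReal.ofReal_lt_ofReal_iff_of_nonneg hs0pos.le).mp hc
          have hd0 : (0:ℝ) < (d' : ℝ) := lt_trans hs0pos hcR
          have hlog4 : Real.log (4*lam) = 2 * Real.log 2 + Real.log lam := by
            rw [Real.log_mul (by norm_num) (ne_of_gt hl0),
              show (4:ℝ) = 2^2 by norm_num, Real.log_pow]
            push_cast; ring
          have hdlog : Real.log (4*lam) < (d':ℝ) * Real.log (2/γ) := by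
            rw [hlog4]
            have := (div_lt_iff₀ hlogden).mp hcR
            linarith
          have := measure_T_zero ⟨hl2, hl1⟩ ⟨hg0, hg1⟩ z hd0 hdlog
          rw [← hT] at this
          rw [hd'] at this
          exact ENNReal.top_ne_zero this
end

section
/- Fix [λ₀, λ₁] ⊂ (1/2, λ̄) where λ̄ is the upper endpoint of the transversality region. Then there is a constant C > 0 such that for all ρ > 0 and all i, j ∈ {0,1}^ℕ with i₁ ≠ j₁, the set of λ ∈ [λ₀, λ₁] for which |Σ_{k=1}^∞ (i_k − j_k) λ^k| < ρ has Lebesgue measure at most Cρ. -/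
open MeasureTheory Filter Set Real

/-- Power series of the form 1 + Σ_{n≥1} bₙ x^n with coefficients bₙ ∈ {0,-1,1}. -/
noncomputable def transSeries (b : ℕ → ℝ) (x : ℝ) : ℝ := 1 + ∑' n : ℕ, b n * x ^ (n + 1)

set_option maxHeartbeats 1000000

lemma ts_summable_n1 {r : ℝ} (hr : |r| < 1) :
    Summable (fun n : ℕ => ((n : ℝ) + 1) * r ^ n) := by
  have h1 := summable_pow_mul_geometric_of_norm_lt_one (R := ℝ) 1 (by rwa [Real.norm_eq_abs])
  have h0 : Summable (fun n : ℕ => r ^ n) := summable_geometric_of_norm_lt_one (by rwa [Real.norm_eq_abs])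
  have := h1.add h0
  refine this.congr fun n => ?_
  push_cast
  ring

lemma ts_summable_n2 {r : ℝ} (hr : |r| < 1) :
    Summable (fun n : ℕ => ((n : ℝ) + 1) * (n : ℝ) * r ^ n) := by
  have h2 := summable_pow_mul_geometric_of_norm_lt_one (R := ℝ) 2 (by rwa [Real.norm_eq_abs])
  have h1 := summable_pow_mul_geometric_of_norm_lt_one (R := ℝ) 1 (by rwa [Real.norm_eq_abs])
  have := h2.add h1
  refine this.congr fun n => ?_
  push_cast
  ring

lemma ts_summable_u2 {r : ℝ} (hr0 : 0 < r) (hr : r < 1) :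
    Summable (fun n : ℕ => ((n : ℝ) + 1) * ((n : ℝ) * r ^ (n - 1))) := by
  have habs : |r| < 1 := by rwa [abs_of_pos hr0]
  have heq : (fun n : ℕ => ((n : ℝ) + 1) * ((n : ℝ) * r ^ (n - 1))) =
      fun n : ℕ => (1 / r) * (((n : ℝ) + 1) * (n : ℝ) * r ^ n) := by
    funext n
    cases n with
    | zero => simp
    | succ m =>
      have : r ^ (m + 1) = r ^ m * r := pow_succ r m
      simp only [Nat.add_sub_cancel, this]
      field_simp
  rw [heq]
  exact (ts_summable_n2 habs).mul_left _

noncomputable def tsF1 (b : ℕ → ℝ) (x : ℝ) : ℝ := ∑' n : ℕ, b n * (((n : ℝ) + 1) * x ^ n)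
noncomputable def tsF2 (b : ℕ → ℝ) (x : ℝ) : ℝ :=
  ∑' n : ℕ, b n * (((n : ℝ) + 1) * ((n : ℝ) * x ^ (n - 1)))

lemma ts_hasDerivAt {b : ℕ → ℝ} (hb : ∀ n, |b n| ≤ 1) {r : ℝ} (hr0 : 0 < r) (hr1 : r < 1)
    {x : ℝ} (hx : x ∈ Ioo (-r) r) : HasDerivAt (transSeries b) (tsF1 b x) x := by
  have habs : |r| < 1 := by rwa [abs_of_pos hr0]
  have h0mem : (0 : ℝ) ∈ Ioo (-r) r := ⟨neg_lt_zero.2 hr0, hr0⟩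
  have key : HasDerivAt (fun z : ℝ => ∑' n : ℕ, b n * z ^ (n + 1)) (tsF1 b x) x := by
    apply hasDerivAt_tsum_of_isPreconnected (ts_summable_n1 habs) isOpen_Ioo
      (convex_Ioo _ _).isPreconnected
      (g := fun n z => b n * z ^ (n + 1))
      (g' := fun n z => b n * (((n : ℝ) + 1) * z ^ n)) ?_ ?_ h0mem ?_ hx
    · intro n y _
      have h := (hasDerivAt_pow (n + 1) y).const_mul (b n)
      simpa [Nat.add_sub_cancel] using h
    · intro n y hy
      have hy' : |y| ≤ r := le_of_lt (abs_lt.2 ⟨hy.1, hy.2⟩)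
      have : ‖b n * (((n : ℝ) + 1) * y ^ n)‖ = |b n| * (((n : ℝ) + 1) * |y| ^ n) := by
        rw [Real.norm_eq_abs, abs_mul, abs_mul, abs_pow, abs_of_nonneg (by positivity : (0:ℝ) ≤ (n:ℝ)+1)]
      rw [this]
      calc |b n| * (((n : ℝ) + 1) * |y| ^ n) ≤ 1 * (((n : ℝ) + 1) * r ^ n) := by
            apply mul_le_mul (hb n) _ (by positivity) zero_le_one
            exact mul_le_mul_of_nonneg_left (pow_le_pow_left₀ (abs_nonneg _) hy' n) (by positivity)
        _ = ((n : ℝ) + 1) * r ^ n := one_mul _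
    · apply summable_of_ne_finset_zero (s := ∅)
      intro n _
      simp
  have : HasDerivAt (fun z : ℝ => 1 + ∑' n : ℕ, b n * z ^ (n + 1)) (tsF1 b x) x := key.const_add 1
  exact this

lemma ts_hasDerivAt_F1 {b : ℕ → ℝ} (hb : ∀ n, |b n| ≤ 1) {r : ℝ} (hr0 : 0 < r) (hr1 : r < 1)
    {x : ℝ} (hx : x ∈ Ioo (-r) r) : HasDerivAt (tsF1 b) (tsF2 b x) x := by
  have h0mem : (0 : ℝ) ∈ Ioo (-r) r := ⟨neg_lt_zero.2 hr0, hr0⟩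
  apply hasDerivAt_tsum_of_isPreconnected (ts_summable_u2 hr0 hr1) isOpen_Ioo
    (convex_Ioo _ _).isPreconnected
    (g := fun n z => b n * (((n : ℝ) + 1) * z ^ n))
    (g' := fun n z => b n * (((n : ℝ) + 1) * ((n : ℝ) * z ^ (n - 1)))) ?_ ?_ h0mem ?_ hx
  · intro n y _
    have h := (hasDerivAt_pow n y).const_mul (b n * ((n : ℝ) + 1))
    have heq : (fun z : ℝ => b n * ((n : ℝ) + 1) * z ^ n) = fun z : ℝ => b n * (((n : ℝ) + 1) * z ^ n) := by
      funext z; ring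
    rw [heq] at h
    exact h.congr_deriv (by ring)
  · intro n y hy
    have hy' : |y| ≤ r := le_of_lt (abs_lt.2 ⟨hy.1, hy.2⟩)
    have hn : ‖b n * (((n : ℝ) + 1) * ((n : ℝ) * y ^ (n - 1)))‖ =
        |b n| * (((n : ℝ) + 1) * ((n : ℝ) * |y| ^ (n - 1))) := by
      rw [Real.norm_eq_abs, abs_mul, abs_mul, abs_mul, abs_pow,
        abs_of_nonneg (by positivity : (0:ℝ) ≤ (n:ℝ)+1), Nat.abs_cast]
    rw [hn]
    calc |b n| * (((n : ℝ) + 1) * ((n : ℝ) * |y| ^ (n - 1)))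
        ≤ 1 * (((n : ℝ) + 1) * ((n : ℝ) * r ^ (n - 1))) := by
          apply mul_le_mul (hb n) _ (by positivity) zero_le_one
          apply mul_le_mul_of_nonneg_left _ (by positivity)
          exact mul_le_mul_of_nonneg_left (pow_le_pow_left₀ (abs_nonneg _) hy' _) (by positivity)
      _ = ((n : ℝ) + 1) * ((n : ℝ) * r ^ (n - 1)) := one_mul _
  · apply summable_of_ne_finset_zero (s := {0})
    intro n hn
    have : n ≠ 0 := by simpa using hn
    rcases Nat.exists_eq_succ_of_ne_zero this with ⟨m, rfl⟩
    simp

/-- Lipschitz estimate for tsF1 on a convex subset of `Ioo (-r) r`. -/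
lemma ts_F1_lip {b : ℕ → ℝ} (hb : ∀ n, |b n| ≤ 1) {r : ℝ} (hr0 : 0 < r) (hr1 : r < 1)
    {s : Set ℝ} (hs : s ⊆ Ioo (-r) r) (hconv : Convex ℝ s) {x y : ℝ} (hx : x ∈ s) (hy : y ∈ s) :
    |tsF1 b y - tsF1 b x| ≤ (∑' n : ℕ, ((n : ℝ) + 1) * ((n : ℝ) * r ^ (n - 1))) * |y - x| := by
  set M0 := ∑' n : ℕ, ((n : ℝ) + 1) * ((n : ℝ) * r ^ (n - 1)) with hM0
  have bound : ∀ z ∈ s, ‖tsF2 b z‖ ≤ M0 := by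
    intro z hz
    have hz' : |z| ≤ r := le_of_lt (abs_lt.2 ⟨(hs hz).1, (hs hz).2⟩)
    apply tsum_of_norm_bounded (ts_summable_u2 hr0 hr1).hasSum
    intro n
    have : ‖b n * (((n : ℝ) + 1) * ((n : ℝ) * z ^ (n - 1)))‖ =
        |b n| * (((n : ℝ) + 1) * ((n : ℝ) * |z| ^ (n - 1))) := by
      rw [Real.norm_eq_abs, abs_mul, abs_mul, abs_mul, abs_pow,
        abs_of_nonneg (by positivity : (0:ℝ) ≤ (n:ℝ)+1), Nat.abs_cast]
    rw [this]
    calc |b n| * (((n : ℝ) + 1) * ((n : ℝ) * |z| ^ (n - 1)))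
        ≤ 1 * (((n : ℝ) + 1) * ((n : ℝ) * r ^ (n - 1))) := by
          apply mul_le_mul (hb n) _ (by positivity) zero_le_one
          apply mul_le_mul_of_nonneg_left _ (by positivity)
          exact mul_le_mul_of_nonneg_left (pow_le_pow_left₀ (abs_nonneg _) hz' _) (by positivity)
      _ = ((n : ℝ) + 1) * ((n : ℝ) * r ^ (n - 1)) := one_mul _
  have := hconv.norm_image_sub_le_of_norm_hasDerivWithin_le
    (f := tsF1 b) (f' := tsF2 b)
    (fun z hz => (ts_hasDerivAt_F1 hb hr0 hr1 (hs hz)).hasDerivWithinAt) bound hx hy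
  simpa [Real.norm_eq_abs] using this

/-- Continuity of both series in (b, x) jointly. -/
lemma ts_contOn {r : ℝ} (hr0 : 0 < r) (hr1 : r < 1) :
    ContinuousOn (fun p : (ℕ → ℝ) × ℝ => max |transSeries p.1 p.2| |tsF1 p.1 p.2|)
      ({b : ℕ → ℝ | ∀ n, |b n| ≤ 1} ×ˢ Icc (-r) r) := by
  set s := ({b : ℕ → ℝ | ∀ n, |b n| ≤ 1} ×ˢ Icc (-r) r : Set ((ℕ → ℝ) × ℝ))
  have habs : |r| < 1 := by rwa [abs_of_pos hr0]
  have hmem : ∀ p : (ℕ → ℝ) × ℝ, p ∈ s → (∀ n, |p.1 n| ≤ 1) ∧ |p.2| ≤ r := by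
    intro p hp
    exact ⟨hp.1, abs_le.2 ⟨hp.2.1, hp.2.2⟩⟩
  have h1 : ContinuousOn (fun p : (ℕ → ℝ) × ℝ => ∑' n : ℕ, p.1 n * p.2 ^ (n + 1)) s := by
    apply continuousOn_tsum (u := fun n : ℕ => r ^ (n + 1))
    · intro n
      exact (((continuous_apply n).comp continuous_fst).mul (continuous_snd.pow (n + 1))).continuousOn
    · exact (summable_geometric_of_norm_lt_one (x := r) (by rwa [Real.norm_eq_abs])).comp_injective
        (add_left_injective 1) |>.congr (fun n => rfl)
    · intro n p hp
      obtain ⟨hb, hx⟩ := hmem p hp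
      rw [Real.norm_eq_abs, abs_mul, abs_pow]
      calc |p.1 n| * |p.2| ^ (n + 1) ≤ 1 * r ^ (n + 1) := by
            apply mul_le_mul (hb n) (pow_le_pow_left₀ (abs_nonneg _) hx _) (by positivity) zero_le_one
        _ = r ^ (n + 1) := one_mul _
  have h2 : ContinuousOn (fun p : (ℕ → ℝ) × ℝ => ∑' n : ℕ, p.1 n * (((n : ℝ) + 1) * p.2 ^ n)) s := by
    apply continuousOn_tsum (u := fun n : ℕ => ((n : ℝ) + 1) * r ^ n)
    · intro n
      exact (((continuous_apply n).comp continuous_fst).mul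
        ((continuous_const.mul (continuous_snd.pow n)))).continuousOn
    · exact ts_summable_n1 habs
    · intro n p hp
      obtain ⟨hb, hx⟩ := hmem p hp
      rw [Real.norm_eq_abs, abs_mul, abs_mul, abs_pow,
        abs_of_nonneg (by positivity : (0:ℝ) ≤ (n:ℝ)+1)]
      calc |p.1 n| * (((n : ℝ) + 1) * |p.2| ^ n) ≤ 1 * (((n : ℝ) + 1) * r ^ n) := by
            apply mul_le_mul (hb n) _ (by positivity) zero_le_one
            exact mul_le_mul_of_nonneg_left (pow_le_pow_left₀ (abs_nonneg _) hx n) (by positivity)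
        _ = ((n : ℝ) + 1) * r ^ n := one_mul _
  have hA : ContinuousOn (fun p : (ℕ → ℝ) × ℝ => transSeries p.1 p.2) s := by
    exact continuousOn_const.add h1
  exact ContinuousOn.sup hA.abs h2.abs

theorem statement11 (l0 l1 : ℝ) (h0 : (1 / 2 : ℝ) < l0) (h01 : l0 ≤ l1) (h1 : l1 < 1)
    (htrans : ∀ b : ℕ → ℝ, (∀ n, b n = 0 ∨ b n = -1 ∨ b n = 1) →
      ∀ x ∈ Set.Icc l0 l1, ¬(transSeries b x = 0 ∧ deriv (transSeries b) x = 0)) :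
    ∃ C : ℝ, 0 < C ∧ ∀ ρ : ℝ, 0 < ρ → ∀ i j : ℕ → Fin 2, i 0 ≠ j 0 →
      volume {lam ∈ Set.Icc l0 l1 |
          |∑' k : ℕ, (((i k : ℕ) : ℝ) - ((j k : ℕ) : ℝ)) * lam ^ (k + 1)| < ρ} ≤
        ENNReal.ofReal (C * ρ) := by
  have hl0pos : (0 : ℝ) < l0 := lt_trans (by norm_num) h0
  set r : ℝ := (1 + l1) / 2 with hrdef
  have hr0 : (0 : ℝ) < r := by rw [hrdef]; linarith
  have hr1 : r < 1 := by rw [hrdef]; linarith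
  have hl1r : l1 < r := by rw [hrdef]; linarith
  have hsub : Icc l0 l1 ⊆ Ioo (-r) r := by
    intro x hx
    exact ⟨by nlinarith [hx.1], lt_of_le_of_lt hx.2 hl1r⟩
  -- the compact coefficient space
  set K : Set (ℕ → ℝ) := {b | ∀ n, b n = 0 ∨ b n = -1 ∨ b n = 1} with hKdef
  have hKb : ∀ b ∈ K, ∀ n, |b n| ≤ 1 := by
    intro b hb n
    rcases hb n with h | h | h <;> rw [h] <;> norm_num
  have hKcomp : IsCompact K := by
    have hK2 : K = {b : ℕ → ℝ | ∀ n, b n ∈ ({0, -1, 1} : Set ℝ)} := by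
      ext b
      simp [hKdef, Set.mem_insert_iff]
    rw [hK2]
    exact isCompact_pi_infinite fun n => (Set.toFinite ({0, -1, 1} : Set ℝ)).isCompact
  -- minimum of the transversality functional on the compact set
  set G : (ℕ → ℝ) × ℝ → ℝ := fun p => max |transSeries p.1 p.2| |tsF1 p.1 p.2| with hGdef
  have hGcont : ContinuousOn G (K ×ˢ Icc l0 l1) := by
    apply (ts_contOn hr0 hr1).mono
    rintro ⟨b, x⟩ ⟨hb, hx⟩
    exact ⟨hKb b hb, (hsub hx).1.le, (hsub hx).2.le⟩
  have hne : ((fun _ : ℕ => (0 : ℝ)), l0) ∈ K ×ˢ Icc l0 l1 :=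
    ⟨fun n => Or.inl rfl, le_refl _, h01⟩
  obtain ⟨p0, hp0, hmin⟩ := (hKcomp.prod isCompact_Icc).exists_isMinOn ⟨_, hne⟩ hGcont
  set δ : ℝ := G p0 with hδdef
  have hδpos : 0 < δ := by
    rcases lt_or_ge 0 δ with h | h
    · exact h
    · exfalso
      have h1' : |transSeries p0.1 p0.2| ≤ 0 := le_trans (le_max_left _ _) h
      have h2' : |tsF1 p0.1 p0.2| ≤ 0 := le_trans (le_max_right _ _) h
      have hx : p0.2 ∈ Icc l0 l1 := hp0.2
      apply htrans p0.1 hp0.1 p0.2 hx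
      constructor
      · exact abs_eq_zero.1 (le_antisymm h1' (abs_nonneg _))
      · rw [(ts_hasDerivAt (hKb p0.1 hp0.1) hr0 hr1 (hsub hx)).deriv]
        exact abs_eq_zero.1 (le_antisymm h2' (abs_nonneg _))
  have hδle : ∀ b ∈ K, ∀ x ∈ Icc l0 l1, δ ≤ max |transSeries b x| |tsF1 b x| := by
    intro b hb x hx
    exact hmin (show (b, x) ∈ K ×ˢ Icc l0 l1 from ⟨hb, hx⟩)
  -- constants
  set M : ℝ := (∑' n : ℕ, ((n : ℝ) + 1) * ((n : ℝ) * r ^ (n - 1))) + 1 with hMdef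
  have htsum_nonneg : 0 ≤ ∑' n : ℕ, ((n : ℝ) + 1) * ((n : ℝ) * r ^ (n - 1)) :=
    tsum_nonneg fun n => by positivity
  have hM1 : 1 ≤ M := by rw [hMdef]; linarith
  have hMpos : 0 < M := lt_of_lt_of_le one_pos hM1
  have hlipM : ∀ b ∈ K, ∀ x ∈ Icc l0 l1, ∀ y ∈ Icc l0 l1,
      |tsF1 b y - tsF1 b x| ≤ M * |y - x| := by
    intro b hb x hx y hy
    refine le_trans (ts_F1_lip (hKb b hb) hr0 hr1 hsub (convex_Icc _ _) hx hy) ?_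
    apply mul_le_mul_of_nonneg_right _ (abs_nonneg _)
    rw [hMdef]; linarith
  set L : ℝ := δ / (2 * M) with hLdef
  have hLpos : 0 < L := by rw [hLdef]; positivity
  have hML : M * L = δ / 2 := by
    rw [hLdef]; field_simp
  set Nn : ℕ := ⌈(l1 - l0) / L⌉₊ + 1 with hNndef
  set C1 : ℝ := 8 * Nn / δ + 2 * (l1 - l0) / δ + 1 with hC1def
  have hC1pos : 0 < C1 := by
    have h8 : (0 : ℝ) ≤ 8 * Nn / δ := by positivity
    have h2 : (0 : ℝ) ≤ 2 * (l1 - l0) / δ := by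
      apply div_nonneg _ hδpos.le; linarith
    rw [hC1def]; linarith
  -- main estimate for a fixed admissible coefficient sequence
  have main : ∀ b ∈ K, ∀ ρ' : ℝ, 0 < ρ' →
      volume {x | x ∈ Icc l0 l1 ∧ |transSeries b x| < ρ'} ≤ ENNReal.ofReal (C1 * ρ') := by
    intro b hb ρ' hρ'
    set S := {x | x ∈ Icc l0 l1 ∧ |transSeries b x| < ρ'} with hSdef
    rcases lt_or_ge (δ / 2) ρ' with hcase | hcase
    · -- large ρ' : trivial bound by the length of the interval
      have hsubS : S ⊆ Icc l0 l1 := fun x hx => hx.1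
      calc volume S ≤ volume (Icc l0 l1) := measure_mono hsubS
        _ = ENNReal.ofReal (l1 - l0) := Real.volume_Icc
        _ ≤ ENNReal.ofReal (C1 * ρ') := by
            apply ENNReal.ofReal_le_ofReal
            have h2 : 2 * (l1 - l0) / δ * (δ / 2) = l1 - l0 := by field_simp
            have h8 : (0 : ℝ) ≤ 8 * Nn / δ := by positivity
            have hnon : (0 : ℝ) ≤ 2 * (l1 - l0) / δ := div_nonneg (by linarith) hδpos.le
            have hstep : 2 * (l1 - l0) / δ * (δ / 2) ≤ 2 * (l1 - l0) / δ * ρ' :=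
              mul_le_mul_of_nonneg_left hcase.le hnon
            rw [hC1def]
            nlinarith [mul_nonneg h8 hρ'.le]
    · -- small ρ' : covering argument
      have hIk : ∀ k : ℕ, ∀ x ∈ S ∩ Icc (l0 + k * L) (l0 + k * L + L),
          ∀ y ∈ S ∩ Icc (l0 + k * L) (l0 + k * L + L), x < y → y - x ≤ 4 * ρ' / δ := by
        intro k x hx y hy hxy
        have hxI : x ∈ Icc l0 l1 := hx.1.1
        have hyI : y ∈ Icc l0 l1 := hy.1.1
        have hfx : |transSeries b x| < ρ' := hx.1.2
        have hfy : |transSeries b y| < ρ' := hy.1.2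
        have hF1x : δ ≤ |tsF1 b x| := by
          rcases le_max_iff.1 (hδle b hb x hxI) with h | h
          · exfalso; linarith
          · exact h
        obtain ⟨c, hc, hceq⟩ := exists_hasDerivAt_eq_slope (transSeries b) (tsF1 b) hxy
          (fun z hz => (ts_hasDerivAt (hKb b hb) hr0 hr1
            (hsub ⟨le_trans hxI.1 hz.1, le_trans hz.2 hyI.2⟩)).continuousAt.continuousWithinAt)
          (fun z hz => ts_hasDerivAt (hKb b hb) hr0 hr1
            (hsub ⟨le_trans hxI.1 hz.1.le, le_trans hz.2.le hyI.2⟩))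
        have hcI : c ∈ Icc l0 l1 := ⟨le_trans hxI.1 hc.1.le, le_trans hc.2.le hyI.2⟩
        have hcx : |c - x| ≤ L := by
          rw [abs_le]
          constructor
          · linarith [hc.1, hLpos]
          · linarith [hc.2.le, hy.2.2, hx.2.1]
        have hlip : |tsF1 b c - tsF1 b x| ≤ δ / 2 := by
          calc |tsF1 b c - tsF1 b x| ≤ M * |c - x| := hlipM b hb x hxI c hcI
            _ ≤ M * L := mul_le_mul_of_nonneg_left hcx hMpos.le
            _ = δ / 2 := hML
        have hF1c : δ / 2 ≤ |tsF1 b c| := by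
          have habs := abs_sub_abs_le_abs_sub (tsF1 b x) (tsF1 b c)
          rw [abs_sub_comm (tsF1 b x) (tsF1 b c)] at habs
          linarith
        have hslope : transSeries b y - transSeries b x = tsF1 b c * (y - x) := by
          rw [hceq, div_mul_cancel₀ _ (sub_ne_zero.2 hxy.ne')]
        have hlow : δ / 2 * (y - x) ≤ |transSeries b y - transSeries b x| := by
          rw [hslope, abs_mul, abs_of_pos (by linarith : (0 : ℝ) < y - x)]
          exact mul_le_mul_of_nonneg_right hF1c (by linarith)
        have hup : |transSeries b y - transSeries b x| ≤
            |transSeries b y| + |transSeries b x| := abs_sub _ _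
        rw [le_div_iff₀ hδpos]
        nlinarith
      have hcover : S ⊆ ⋃ k ∈ Finset.range Nn, (S ∩ Icc (l0 + k * L) (l0 + k * L + L)) := by
        intro x hx
        have hx0 : 0 ≤ x - l0 := by linarith [hx.1.1]
        set k : ℕ := ⌊(x - l0) / L⌋₊ with hkdef
        have hk1 : (k : ℝ) * L ≤ x - l0 := by
          calc (k : ℝ) * L ≤ (x - l0) / L * L :=
                mul_le_mul_of_nonneg_right (Nat.floor_le (div_nonneg hx0 hLpos.le)) hLpos.le
            _ = x - l0 := div_mul_cancel₀ _ hLpos.ne'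
        have hk2 : x - l0 < ((k : ℝ) + 1) * L := by
          calc x - l0 = (x - l0) / L * L := (div_mul_cancel₀ _ hLpos.ne').symm
            _ < ((k : ℝ) + 1) * L := by
                apply mul_lt_mul_of_pos_right _ hLpos
                exact_mod_cast Nat.lt_floor_add_one ((x - l0) / L)
        have hkN : k < Nn := by
          have hle : k ≤ ⌈(l1 - l0) / L⌉₊ := by
            calc k ≤ ⌊(l1 - l0) / L⌋₊ :=
                  Nat.floor_mono ((div_le_div_iff_of_pos_right hLpos).2 (by linarith [hx.1.2]))
              _ ≤ ⌈(l1 - l0) / L⌉₊ := Nat.floor_le_ceil _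
          omega
        refine Set.mem_biUnion (Finset.mem_range.2 hkN) ⟨hx, ?_, ?_⟩ <;> linarith
      have hpiece : ∀ k : ℕ, volume (S ∩ Icc (l0 + k * L) (l0 + k * L + L)) ≤
          ENNReal.ofReal (8 * ρ' / δ) := by
        intro k
        rcases Set.eq_empty_or_nonempty (S ∩ Icc (l0 + k * L) (l0 + k * L + L)) with h | ⟨x0, hx0⟩
        · rw [h]; simp
        · have hd : (0 : ℝ) ≤ 4 * ρ' / δ := by positivity
          have hsubset : S ∩ Icc (l0 + k * L) (l0 + k * L + L) ⊆
              Icc (x0 - 4 * ρ' / δ) (x0 + 4 * ρ' / δ) := by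
            intro y hy
            rcases lt_trichotomy y x0 with h | h | h
            · have := hIk k y hy x0 hx0 h
              exact ⟨by linarith, by linarith⟩
            · rw [h]; exact ⟨by linarith, by linarith⟩
            · have := hIk k x0 hx0 y hy h
              exact ⟨by linarith, by linarith⟩
          calc volume (S ∩ Icc (l0 + k * L) (l0 + k * L + L))
              ≤ volume (Icc (x0 - 4 * ρ' / δ) (x0 + 4 * ρ' / δ)) := measure_mono hsubset
            _ = ENNReal.ofReal (8 * ρ' / δ) := by
                rw [Real.volume_Icc]
                congr 1
                ring
      calc volume S
          ≤ ∑ k ∈ Finset.range Nn, volume (S ∩ Icc (l0 + k * L) (l0 + k * L + L)) :=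
            le_trans (measure_mono hcover) (measure_biUnion_finset_le _ _)
        _ ≤ ∑ k ∈ Finset.range Nn, ENNReal.ofReal (8 * ρ' / δ) :=
            Finset.sum_le_sum fun k _ => hpiece k
        _ = (Nn : ENNReal) * ENNReal.ofReal (8 * ρ' / δ) := by
            rw [Finset.sum_const, Finset.card_range, nsmul_eq_mul]
        _ = ENNReal.ofReal ((Nn : ℝ) * (8 * ρ' / δ)) := by
            rw [ENNReal.ofReal_mul (by positivity), ENNReal.ofReal_natCast]
        _ ≤ ENNReal.ofReal (C1 * ρ') := by
            apply ENNReal.ofReal_le_ofReal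
            have heq : (Nn : ℝ) * (8 * ρ' / δ) = (8 * Nn / δ) * ρ' := by ring
            rw [heq]
            apply mul_le_mul_of_nonneg_right _ hρ'.le
            have h2 : (0 : ℝ) ≤ 2 * (l1 - l0) / δ := by
              apply div_nonneg _ hδpos.le; linarith
            rw [hC1def]; linarith
  -- conclusion: reduce the difference series to a transSeries
  refine ⟨2 * C1, by linarith, ?_⟩
  intro ρ hρ i j hij
  set a : ℕ → ℝ := fun k => ((i k : ℕ) : ℝ) - ((j k : ℕ) : ℝ) with hadef
  have haval : ∀ k, a k = 0 ∨ a k = -1 ∨ a k = 1 := by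
    intro k
    have hik : (i k : ℕ) = 0 ∨ (i k : ℕ) = 1 := by have := (i k).isLt; omega
    have hjk : (j k : ℕ) = 0 ∨ (j k : ℕ) = 1 := by have := (j k).isLt; omega
    simp only [hadef]
    rcases hik with h | h <;> rcases hjk with h' | h' <;> rw [h, h'] <;> norm_num
  have haabs : ∀ k, |a k| ≤ 1 := by
    intro k
    rcases haval k with h | h | h <;> rw [h] <;> norm_num
  have hε : a 0 = 1 ∨ a 0 = -1 := by
    have hne : (i 0 : ℕ) ≠ (j 0 : ℕ) := fun h => hij (Fin.ext h)
    have hcases : (i 0 : ℕ) = 0 ∧ (j 0 : ℕ) = 1 ∨ (i 0 : ℕ) = 1 ∧ (j 0 : ℕ) = 0 := by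
      have := (i 0).isLt; have := (j 0).isLt; omega
    simp only [hadef]
    rcases hcases with ⟨h1, h2⟩ | ⟨h1, h2⟩ <;> rw [h1, h2] <;> norm_num
  have hεsq : a 0 * a 0 = 1 := by rcases hε with h | h <;> rw [h] <;> norm_num
  set b : ℕ → ℝ := fun n => a 0 * a (n + 1) with hbdef
  have hbK : b ∈ K := by
    intro n
    rcases hε with h | h <;> rcases haval (n + 1) with h' | h' | h' <;>
      simp only [hbdef] <;> rw [h, h'] <;> norm_num
  -- key algebraic identity
  have hkey : ∀ lam ∈ Icc l0 l1,
      (∑' k : ℕ, a k * lam ^ (k + 1)) = a 0 * lam * transSeries b lam := by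
    intro lam hlam
    have hlam0 : 0 ≤ lam := le_trans hl0pos.le hlam.1
    have hlam1 : lam < 1 := lt_of_le_of_lt hlam.2 h1
    have habs : ‖lam‖ < 1 := by rw [Real.norm_eq_abs, abs_of_nonneg hlam0]; exact hlam1
    have hgeo : Summable (fun k : ℕ => |lam| ^ (k + 1)) :=
      (summable_geometric_of_norm_lt_one (x := |lam|) (by rwa [Real.norm_eq_abs, abs_abs,
        ← Real.norm_eq_abs])).comp_injective (add_left_injective 1)
    have hsumm : Summable (fun k : ℕ => a k * lam ^ (k + 1)) := by
      apply Summable.of_norm_bounded hgeo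
      intro k
      rw [Real.norm_eq_abs, abs_mul, abs_pow]
      calc |a k| * |lam| ^ (k + 1) ≤ 1 * |lam| ^ (k + 1) :=
            mul_le_mul_of_nonneg_right (haabs k) (by positivity)
        _ = |lam| ^ (k + 1) := one_mul _
    rw [Summable.tsum_eq_zero_add hsumm]
    have hrhs : a 0 * lam * transSeries b lam
        = a 0 * lam + ∑' n : ℕ, (a 0 * lam) * (b n * lam ^ (n + 1)) := by
      rw [transSeries, mul_add, mul_one, tsum_mul_left]
    rw [hrhs]
    congr 1
    · ring
    · apply tsum_congr
      intro n
      simp only [hbdef]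
      calc a (n + 1) * lam ^ (n + 1 + 1)
          = (a 0 * a 0) * (a (n + 1) * lam ^ (n + 1 + 1)) := by rw [hεsq]; ring
        _ = a 0 * lam * (a 0 * a (n + 1) * lam ^ (n + 1)) := by ring
  have habs0 : |a 0| = 1 := by rcases hε with h | h <;> rw [h] <;> norm_num
  have hsubset2 : {lam ∈ Set.Icc l0 l1 |
        |∑' k : ℕ, (((i k : ℕ) : ℝ) - ((j k : ℕ) : ℝ)) * lam ^ (k + 1)| < ρ} ⊆
      {x | x ∈ Icc l0 l1 ∧ |transSeries b x| < 2 * ρ} := by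
    rintro lam ⟨hmem, hlt⟩
    refine ⟨hmem, ?_⟩
    have hlt' : |∑' k : ℕ, a k * lam ^ (k + 1)| < ρ := hlt
    rw [hkey lam hmem, abs_mul, abs_mul, habs0, one_mul,
      abs_of_nonneg (le_trans hl0pos.le hmem.1)] at hlt'
    nlinarith [abs_nonneg (transSeries b lam), hmem.1]
  calc volume {lam ∈ Set.Icc l0 l1 |
        |∑' k : ℕ, (((i k : ℕ) : ℝ) - ((j k : ℕ) : ℝ)) * lam ^ (k + 1)| < ρ}
      ≤ volume {x | x ∈ Icc l0 l1 ∧ |transSeries b x| < 2 * ρ} := measure_mono hsubset2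
    _ ≤ ENNReal.ofReal (C1 * (2 * ρ)) := main b hbK (2 * ρ) (by linarith)
    _ = ENNReal.ofReal (2 * C1 * ρ) := by congr 1; ring
end

section
/- Let γ ∈ (0,1), λ ∈ (1/2, 1), and assume ν_λ(B(x,r)) ≤ C₁r^{1−ε} for all x, r and every ε > 0 (with constant depending on ε) — the conclusion of the exponential separation condition. Fix z ∈ F and a sequence (n_m) with n_{m+1} − n_m > ⌈n_m log γ / log λ⌉ and n_m/n_{m+1} → 0. Define the measure μ̄ on the Cantor set 𝒞 = ∩_m R*_{n_m} as in the paper. Then for every x ∈ 𝒞 and for r with r_{−1}(n_m) ≤ r ≤ n_m and R ∈ [C 2^{−(r+1)}, C 2^{−r}), one has μ̄(Q(x,R)) ≤ 2^{L_{m−1} − r}, where L_m = Σ_{i=1}^m ℓ₂(n_i) and C is the separation constant of the attractor. -/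
open MeasureTheory Filter Set Real

/-- ℓ₂(n): the smallest integer l with λ^l ≤ γ^n. -/
noncomputable def ell2 (lam γ : ℝ) (n : ℕ) : ℕ := sInf {l : ℕ | lam ^ l ≤ γ ^ n}

/-- k(r): the smallest integer k with λ^k ≤ 2^{-r}. -/
noncomputable def kfun (lam : ℝ) (r : ℕ) : ℕ := sInf {k : ℕ | lam ^ k ≤ (1 / 2 : ℝ) ^ r}

/-- The cylinder set of sequences agreeing with w in the first j symbols. -/
def cyl (w : ℕ → Fin 2) (j : ℕ) : Set (ℕ → Fin 2) := {i | ∀ m < j, i m = w m}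

theorem statement12 (lam γ C : ℝ) (hlam : lam ∈ Set.Ioo (1 / 2 : ℝ) 1)
    (hγ : γ ∈ Set.Ioo (0 : ℝ) 1)
    -- the conclusion of the exponential separation condition (Frostman bounds for ν_λ):
    (hfrost : ∀ ε : ℝ, 0 < ε → ∃ C₁ : ℝ, 0 < C₁ ∧ ∀ x r : ℝ, 0 < r →
      nuLam lam (Set.Icc (x - r) (x + r)) ≤ ENNReal.ofReal (C₁ * r ^ (1 - ε)))
    (zb : ℕ → Fin 2) (z : ℝ × ℝ) (hz : piPU lam zb = z)
    -- C is the separation constant of the attractor: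
    (hC : C ∈ Set.Ioo (0 : ℝ) 1)
    (hCsep : ∀ (i j : ℕ → Fin 2) (r : ℕ), (∀ m < r, i m = j m) → i r ≠ j r →
      C * (1 / 2 : ℝ) ^ r ≤ dE (piPU lam i) (piPU lam j))
    -- the sequence (n_m):
    (n : ℕ → ℕ) (hn0 : n 0 = 0) (hmono : StrictMono n)
    (hgap : ∀ m : ℕ, (⌈(n m : ℝ) * Real.log γ / Real.log lam⌉ : ℤ) <
      (n (m + 1) : ℤ) - (n m : ℤ))
    (hratio : Tendsto (fun m => (n m : ℝ) / (n (m + 1) : ℝ)) atTop (nhds 0))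
    (L : ℕ → ℕ) (hL : ∀ m, L m = ∑ i ∈ Finset.range (m + 1), ell2 lam γ (n i))
    -- the measure μ as in the paper, via its values on cylinders:
    (μ : Measure (ℕ → Fin 2)) [IsProbabilityMeasure μ]
    (hbad : ∀ (w : ℕ → Fin 2) (j : ℕ),
      (∃ m t : ℕ, t < ell2 lam γ (n m) ∧ n m + t < j ∧ w (n m + t) ≠ zb t) →
      μ (cyl w j) = 0)
    (hfree : ∀ (w : ℕ → Fin 2) (j m : ℕ),
      (∀ m' t : ℕ, t < ell2 lam γ (n m') → n m' + t < j → w (n m' + t) = zb t) →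
      n m + ell2 lam γ (n m) < j → j ≤ n (m + 1) →
      μ (cyl w j) = ENNReal.ofReal ((2 : ℝ) ^ ((L m : ℤ) - (j : ℤ))))
    (htarget : ∀ (w : ℕ → Fin 2) (j m : ℕ), 1 ≤ m →
      (∀ m' t : ℕ, t < ell2 lam γ (n m') → n m' + t < j → w (n m' + t) = zb t) →
      n m < j → j ≤ n m + ell2 lam γ (n m) →
      μ (cyl w j) = ENNReal.ofReal ((2 : ℝ) ^ ((L (m - 1) : ℤ) - (n m : ℤ)))) :
    -- conclusion: the bound on μ̄(Q(x,R)) = (π_*μ)(Q(x,R))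
    ∀ m : ℕ, 1 ≤ m →
      ∀ x ∈ {x ∈ Set.range (piPU lam) |
        ∀ m' : ℕ, 1 ≤ m' → (Emap lam)^[n m'] x ∈ cube z (γ ^ (n m'))},
      ∀ r rneg : ℕ, kfun lam rneg = n m → rneg ≤ r → r ≤ n m →
      ∀ R : ℝ, R ∈ Set.Ico (C * (1 / 2 : ℝ) ^ (r + 1)) (C * (1 / 2 : ℝ) ^ r) →
      Measure.map (piPU lam) μ (cube x R) ≤
        ENNReal.ofReal ((2 : ℝ) ^ ((L (m - 1) : ℤ) - (r : ℤ))) := by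
  classical
  intro m hm x hx r rneg hk hr1 hr2 R hR
  obtain ⟨⟨w, hw⟩, -⟩ := hx
  have hC0 : 0 < C := hC.1
  have hRpos : 0 < R := lt_of_lt_of_le (by positivity) hR.1
  -- measurability of the cube
  have hcube : MeasurableSet (cube x R) := by
    have h1 : cube x R = {p : ℝ × ℝ | |p.1 - x.1| ≤ R} ∩ {p : ℝ × ℝ | |p.2 - x.2| ≤ R} := rfl
    rw [h1]
    exact (measurableSet_le ((measurable_fst.sub measurable_const).abs) measurable_const).inter
      (measurableSet_le ((measurable_snd.sub measurable_const).abs) measurable_const)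
  -- separation: preimage of the cube lies in the cylinder of length r
  have hsub : piPU lam ⁻¹' cube x R ⊆ cyl w r := by
    rcases Nat.eq_zero_or_pos r with hr0 | hrpos
    · subst hr0; intro i _ t ht; omega
    intro i hi t ht
    by_contra hne
    have hex : ∃ k, i k ≠ w k := ⟨t, hne⟩
    set r' := Nat.find hex with hr'def
    have hmin : ∀ k < r', i k = w k := fun k hk => not_not.mp (Nat.find_min hex hk)
    have hspec : i r' ≠ w r' := Nat.find_spec hex
    have hle : r' ≤ t := Nat.find_min' hex hne
    have hsep := hCsep i w r' hmin hspec
    rw [hw] at hsep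
    have hs0 : (0 : ℝ) ≤ Real.sqrt 2 := Real.sqrt_nonneg 2
    have hs2 : Real.sqrt 2 ^ 2 = 2 := Real.sq_sqrt (by norm_num)
    have hslt : Real.sqrt 2 < 2 := by nlinarith
    have hd : dE (piPU lam i) x ≤ R * Real.sqrt 2 := by
      have h1 : |(piPU lam i).1 - x.1| ≤ R := hi.1
      have h2 : |(piPU lam i).2 - x.2| ≤ R := hi.2
      rw [abs_le] at h1 h2
      have : dE (piPU lam i) x ≤ Real.sqrt (R ^ 2 + R ^ 2) := by
        apply Real.sqrt_le_sqrt; nlinarith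
      refine this.trans_eq ?_
      have : R ^ 2 + R ^ 2 = (R * Real.sqrt 2) ^ 2 := by nlinarith
      rw [this, Real.sqrt_sq (by positivity)]
    have hpow1 : (1 / 2 : ℝ) ^ (r - 1) ≤ (1 / 2 : ℝ) ^ r' :=
      pow_le_pow_of_le_one (by norm_num) (by norm_num) (by omega)
    have hpow2 : (1 / 2 : ℝ) ^ r * 2 = (1 / 2 : ℝ) ^ (r - 1) := by
      have h := pow_succ (1 / 2 : ℝ) (r - 1)
      rw [show r - 1 + 1 = r from by omega] at h
      rw [h]; ring
    have hchain : C * (1 / 2 : ℝ) ^ r' < C * (1 / 2 : ℝ) ^ r' := by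
      calc C * (1 / 2 : ℝ) ^ r' ≤ R * Real.sqrt 2 := hsep.trans hd
        _ < (C * (1 / 2 : ℝ) ^ r) * Real.sqrt 2 := by
            apply mul_lt_mul_of_pos_right hR.2
            nlinarith
        _ < (C * (1 / 2 : ℝ) ^ r) * 2 := by
            apply mul_lt_mul_of_pos_left hslt; positivity
        _ = C * (1 / 2 : ℝ) ^ (r - 1) := by rw [mul_assoc, hpow2]
        _ ≤ C * (1 / 2 : ℝ) ^ r' := by
            apply mul_le_mul_of_nonneg_left hpow1 hC0.le
    exact lt_irrefl _ hchain
  -- push-forward bound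
  have hmap : Measure.map (piPU lam) μ (cube x R) ≤ μ (cyl w r) := by
    by_cases hmeas : AEMeasurable (piPU lam) μ
    · rw [Measure.map_apply_of_aemeasurable hmeas hcube]
      exact measure_mono hsub
    · rw [Measure.map_of_not_aemeasurable hmeas]; simp
  refine hmap.trans ?_
  -- monotonicity of L
  have hL1 : ∀ a b : ℕ, a ≤ b → L a ≤ L b := by
    intro a b hab
    rw [hL, hL]
    exact Finset.sum_le_sum_of_subset (Finset.range_subset_range.mpr (by omega))
  have hell0 : ell2 lam γ 0 = 0 := by
    apply Nat.sInf_eq_zero.mpr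
    left; simp
  by_cases hgood : ∀ m' t : ℕ, t < ell2 lam γ (n m') → n m' + t < r → w (n m' + t) = zb t
  swap
  · push_neg at hgood
    rw [hbad w r hgood]
    exact zero_le
  rcases Nat.eq_zero_or_pos r with hr0 | hrpos
  · subst hr0
    have h1 : μ (cyl w 0) ≤ 1 := prob_le_one
    refine h1.trans ?_
    rw [ENNReal.one_le_ofReal]
    have : ((L (m - 1) : ℤ) - (0 : ℕ)) = ((L (m - 1) : ℕ) : ℤ) := by push_cast; ring
    rw [this, zpow_natCast]
    exact one_le_pow₀ one_le_two
  · set m'' := Nat.findGreatest (fun k => n k < r) m with hm''def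
    have hP0 : n 0 < r := by rw [hn0]; exact hrpos
    have hPm'' : n m'' < r := Nat.findGreatest_spec (P := fun k => n k < r) (Nat.zero_le m) hP0
    have hm''lt : m'' < m := by
      have h1 : n m'' < n m := lt_of_lt_of_le hPm'' hr2
      exact hmono.lt_iff_lt.mp h1
    have hnext : r ≤ n (m'' + 1) := by
      by_contra h
      push_neg at h
      exact Nat.findGreatest_is_greatest (P := fun k => n k < r) (Nat.lt_succ_self m'') (by omega) h
    by_cases hcase : r ≤ n m'' + ell2 lam γ (n m'')
    · have hm''1 : 1 ≤ m'' := by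
        rcases Nat.eq_zero_or_pos m'' with h0 | h; swap; · exact h
        rw [h0, hn0, hell0] at hcase; omega
      rw [htarget w r m'' hm''1 hgood hPm'' hcase]
      apply ENNReal.ofReal_le_ofReal
      apply zpow_le_zpow_right₀ one_le_two
      have e1 : L (m'' - 1) + ell2 lam γ (n m'') = L m'' := by
        rw [hL, hL, show m'' - 1 + 1 = m'' from by omega, Finset.sum_range_succ]
      have e2 : L m'' ≤ L (m - 1) := hL1 _ _ (by omega)
      omega
    · push_neg at hcase
      rw [hfree w r m'' hgood hcase hnext]
      apply ENNReal.ofReal_le_ofReal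
      apply zpow_le_zpow_right₀ one_le_two
      have e2 : L m'' ≤ L (m - 1) := hL1 _ _ (by omega)
      omega
end
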